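/- arXiv:math/0507320 — 6 statements merged into one kernel-verified Lean document; each statement's English description precedes it below -/
import Mathlib

section
/- Let R be a commutative ring and let M and N be finitely presented R-modules whose supports are disjoint, i.e., Supp(M) ∩ Supp(N) = ∅. Then Ext^i_R(M, N) = 0 for all i ≥ 0. -/
/-!
Disjoint supports make the annihilators of `M` and `N` comaximal, so some `a : R` kills `M` and
acts as the identity on `N`. Multiplication by `a` on `Ext^i(M, N)` can be computed on either
argument: through `M` it is zero, through `N` it is the identity, so `Ext^i(M, N) = 0`.
-/

open CategoryTheory Limits Opposite

universe u

lemma Module.exists_smul_eq_zero_and_smul_eq_self_of_disjoint_support {R M N : Type*}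
    [CommRing R] [AddCommGroup M] [Module R M] [AddCommGroup N] [Module R N]
    [Module.Finite R M] [Module.Finite R N] (h : support R M ∩ support R N = ∅) :
    ∃ a : R, (∀ m : M, a • m = 0) ∧ ∀ n : N, a • n = n := by
  have hsup : annihilator R M ⊔ annihilator R N = ⊤ := by
    rw [← PrimeSpectrum.zeroLocus_empty_iff_eq_top, PrimeSpectrum.zeroLocus_sup,
      ← support_eq_zeroLocus, ← support_eq_zeroLocus, h]
  obtain ⟨a, ha, b, hb, hab⟩ := Submodule.mem_sup.mp (hsup ▸ Submodule.mem_top (x := (1 : R)))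
  refine ⟨a, fun m ↦ mem_annihilator.mp ha m, fun n ↦ ?_⟩
  calc a • n = (a + b) • n := by rw [add_smul, mem_annihilator.mp hb n, add_zero]
    _ = n := by rw [hab, one_smul]

namespace CategoryTheory

variable {R : Type*} [Ring R] {C : Type*} [Category C]

section Preadditive

variable [Preadditive C] [Linear R C]

lemma Linear.smul_eq_zero_of_smul_id_eq_zero {W Y : C} {a : R} (h : a • 𝟙 Y = 0) (f : W ⟶ Y) :
    a • f = 0 := by
  rw [← Category.comp_id f, ← Linear.comp_smul, h, comp_zero]

lemma Linear.smul_eq_self_of_smul_id_eq_id {W Y : C} {a : R} (h : a • 𝟙 Y = 𝟙 Y) (f : W ⟶ Y) :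
    a • f = f := by
  rw [← Category.comp_id f, ← Linear.comp_smul, h]

lemma linearYoneda_map_smul_id {Y : C} {a : R} (hY : a • 𝟙 Y = 𝟙 Y) (W : C) :
    ((linearYoneda R C).obj Y).map (a • 𝟙 W).op = 𝟙 _ := by
  ext (f : W ⟶ Y)
  change (a • 𝟙 W) ≫ f = f
  rw [Linear.smul_comp, Category.id_comp, Linear.smul_eq_self_of_smul_id_eq_id hY]

end Preadditive

variable [Abelian C] [Linear R C]

/-- `a • 𝟙 P.complex` is a lift of `a • 𝟙 X = 0`, hence null-homotopic. -/
noncomputable def ProjectiveResolution.smulIdHomotopyZero {X : C} (P : ProjectiveResolution X)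
    {a : R} (ha : a • 𝟙 X = 0) : Homotopy (a • 𝟙 P.complex) 0 :=
  liftHomotopyZero _ <| by
    rw [Linear.smul_comp (R := R), Category.id_comp]
    ext : 1
    exact Linear.smul_eq_zero_of_smul_id_eq_zero ha (P.π.f 0)

theorem isZero_Ext_of_smul_id [EnoughProjectives C] {X Y : C} {a : R} (hX : a • 𝟙 X = 0)
    (hY : a • 𝟙 Y = 𝟙 Y) (n : ℕ) : IsZero (((Ext R C n).obj (op X)).obj Y) := by
  let P := ProjectiveResolution.of X
  let G := ((linearYoneda R C).obj Y).rightOp.mapHomologicalComplex (ComplexShape.down ℕ)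
  have hG : G.map (a • 𝟙 P.complex) = 𝟙 _ := by
    ext j : 1
    exact Quiver.Hom.unop_inj (linearYoneda_map_smul_id hY _)
  have hzero : IsZero ((G.obj P.complex).homology n) := by
    rw [IsZero.iff_id_eq_zero, ← HomologicalComplex.homologyMap_id, ← hG,
      (Functor.mapHomotopy _ (P.smulIdHomotopyZero hX)).homologyMap_eq n]
    simp
  exact (hzero.unop.of_iso (HomologicalComplex.homologyUnop _ n)).of_iso (P.isoExt n Y)

end CategoryTheory

/-- **Vanishing of Ext for finitely presented modules with disjoint supports.**
If `R` is a commutative ring and `M`, `N` are finitely presented `R`-modules with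
`Supp M ∩ Supp N = ∅`, then `Ext^i_R(M, N) = 0` for all `i ≥ 0`. -/
theorem ext_isZero_of_disjoint_support (R : Type u) [CommRing R]
    (M N : ModuleCat.{u} R)
    (hM : Module.FinitePresentation R M) (hN : Module.FinitePresentation R N)
    (hsupp : Module.support R M ∩ Module.support R N = ∅) (i : ℕ) :
    IsZero (((Ext R (ModuleCat.{u} R) i).obj (op M)).obj N) := by
  obtain ⟨a, haM, haN⟩ := Module.exists_smul_eq_zero_and_smul_eq_self_of_disjoint_support hsupp
  refine isZero_Ext_of_smul_id (a := a) ?_ ?_ i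
  · ext m
    exact haM m
  · ext n
    exact haN n
end

section
/- Let R be a commutative ring, and let M_1, M_2, M_1', M_2' be R-modules such that Ext^1_R(M_1', M_2) = 0 and Ext^1_R(M_2', M_1) = 0. Then for every short exact sequence 0 → M_1 ⊕ M_2 → E → M_1' ⊕ M_2' → 0 of R-modules, the middle term E is isomorphic to a direct sum E_1 ⊕ E_2 where E_1 fits in a short exact sequence 0 → M_1 → E_1 → M_1' → 0 and E_2 fits in a short exact sequence 0 → M_2 → E_2 → M_2' → 0. -/
/-!
Pulling `E` back along `M₁' → M₁' ⊕ M₂'` gives an extension `Z` of `M₁'` by `M₁ ⊕ M₂`. Since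
`Ext¹(M₁', M₂) = 0`, the projection `M₁ ⊕ M₂ → M₂` extends to a map `ψ : Z → M₂`: on a projective
resolution of `M₁'`, the obstruction is a 1-cocycle with values in `M₂`, hence a coboundary. Then
`E₁ := ker ψ ⊆ E` is an extension of `M₁'` by `M₁`, and symmetrically for `E₂`. The submodules
`E₁` and `E₂` are complements in `E` because their traces on `M₁ ⊕ M₂` and their images in
`M₁' ⊕ M₂'` are complements.
-/

open CategoryTheory Limits Opposite

universe u

namespace LinearMap

section

variable {R : Type*} [Ring R] {K E X M M' : Type*} [AddCommGroup K] [Module R K]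
  [AddCommGroup E] [Module R E] [AddCommGroup X] [Module R X] [AddCommGroup M] [Module R M]
  [AddCommGroup M'] [Module R M'] {f : K →ₗ[R] E} {g : E →ₗ[R] X}

theorem exists_comp_eq_of_surjective_of_ker_le (hg : Function.Surjective g)
    {h : E →ₗ[R] M} (hker : ker g ≤ ker h) : ∃ h' : X →ₗ[R] M, h' ∘ₗ g = h :=
  ⟨(ker g).liftQ h hker ∘ₗ (g.quotKerEquivOfSurjective hg).symm.toLinearMap, by ext; simp⟩

theorem exists_comp_eq_of_injective_of_range_le (hf : Function.Injective f)
    {h : M →ₗ[R] E} (hrange : range h ≤ range f) : ∃ h' : M →ₗ[R] K, f ∘ₗ h' = h :=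
  ⟨(LinearEquiv.ofInjective f hf).symm.toLinearMap ∘ₗ h.codRestrict _ fun m => hrange ⟨m, rfl⟩,
    by ext; simp⟩

theorem exists_injective_surjective_range_eq_ker_of_comap_eq_of_map_eq
    (hf : Function.Injective f) (hfg : range f = ker g) {S : Submodule R E}
    {i : M →ₗ[R] K} (hi : Function.Injective i) {j : M' →ₗ[R] X} {q : X →ₗ[R] M'}
    (hqj : q ∘ₗ j = id) (hSf : S.comap f = range i) (hSg : S.map g = range j) :
    ∃ (f₁ : M →ₗ[R] S) (g₁ : S →ₗ[R] M'),
      Function.Injective f₁ ∧ Function.Surjective g₁ ∧ range f₁ = ker g₁ := by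
  have hgf (k : K) : g (f k) = 0 := by rw [← mem_ker, ← hfg]; exact mem_range_self f k
  have hqj' (x : M') : q (j x) = x := congrArg (· x) hqj
  refine ⟨(f ∘ₗ i).codRestrict S fun m => (hSf ▸ mem_range_self i m : i m ∈ S.comap f),
    q ∘ₗ g ∘ₗ S.subtype, fun m m' h => hi (hf (congrArg Subtype.val h)), fun x => ?_, ?_⟩
  · obtain ⟨s, hs, hsx⟩ : j x ∈ S.map g := hSg ▸ mem_range_self j x
    exact ⟨⟨s, hs⟩, by simp [hsx, hqj']⟩
  · ext ⟨s, hs⟩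
    constructor
    · rintro ⟨m, hm⟩
      simp [← hm, hgf]
    · intro hqs
      obtain ⟨x, hx⟩ : g s ∈ range j := hSg ▸ Submodule.mem_map_of_mem hs
      obtain rfl : x = 0 := by simpa [← hx, hqj'] using hqs
      obtain ⟨k, rfl⟩ : s ∈ range f := by rw [hfg, mem_ker, ← hx, map_zero]
      obtain ⟨m, rfl⟩ : k ∈ range i := hSf ▸ hs
      exact ⟨m, rfl⟩

theorem isCompl_of_isCompl_comap_of_isCompl_map (hfg : range f = ker g) {S₁ S₂ : Submodule R E}
    (hK : IsCompl (S₁.comap f) (S₂.comap f)) (hX : IsCompl (S₁.map g) (S₂.map g)) :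
    IsCompl S₁ S₂ := by
  constructor
  · refine Submodule.disjoint_def.2 fun e h₁ h₂ => ?_
    obtain ⟨k, rfl⟩ : e ∈ range f := by
      rw [hfg, mem_ker]
      exact Submodule.disjoint_def.1 hX.disjoint _ ⟨e, h₁, rfl⟩ ⟨e, h₂, rfl⟩
    rw [Submodule.disjoint_def.1 hK.disjoint k h₁ h₂, map_zero]
  · have hker : ker g ≤ S₁ ⊔ S₂ := by
      rw [← hfg, range_eq_map, ← hK.sup_eq_top, Submodule.map_sup]
      exact sup_le_sup (Submodule.map_comap_le _ _) (Submodule.map_comap_le _ _)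
    rw [codisjoint_iff, ← sup_eq_left.2 hker, ← Submodule.comap_map_eq, Submodule.map_sup,
      hX.sup_eq_top, Submodule.comap_top]

end

end LinearMap

theorem CategoryTheory.ProjectiveResolution.exists_d_comp_eq_of_isZero_ext
    {R : Type*} [Ring R] {C : Type*} [Category C] [Abelian C] [Linear R C] [EnoughProjectives C]
    {X Y : C} (P : ProjectiveResolution X) (hExt : IsZero (((Ext R C 1).obj (op X)).obj Y))
    (c : P.complex.X 1 ⟶ Y) (hc : P.complex.d 2 1 ≫ c = 0) :
    ∃ b : P.complex.X 0 ⟶ Y, P.complex.d 1 0 ≫ b = c := by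
  have hexact := (HomologicalComplex.exactAt_iff_isZero_homology _ 1).2
    (hExt.of_iso (P.isoExt 1 Y).symm)
  rw [HomologicalComplex.exactAt_iff' _ 0 1 2 (by simp) (by simp),
    ShortComplex.moduleCat_exact_iff] at hexact
  exact hexact c hc

namespace LinearMap

variable {R : Type u} [CommRing R] {K : Type*} {E X M' Y : Type u} [AddCommGroup K] [Module R K]
  [AddCommGroup E] [Module R E] [AddCommGroup X] [Module R X] [AddCommGroup M'] [Module R M']
  [AddCommGroup Y] [Module R Y]

theorem exists_comp_eq_of_isZero_ext
    (hExt : IsZero (((Ext R (ModuleCat.{u} R) 1).obj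
      (op (ModuleCat.of R X))).obj (ModuleCat.of R Y)))
    {i : K →ₗ[R] E} {p : E →ₗ[R] X} (hi : Function.Injective i) (hp : Function.Surjective p)
    (hip : range i = ker p) (φ : K →ₗ[R] Y) : ∃ ψ : E →ₗ[R] Y, ψ ∘ₗ i = φ := by
  obtain ⟨P⟩ : Nonempty (ProjectiveResolution (ModuleCat.of R X)) := HasProjectiveResolution.out
  let π₀ : P.complex.X 0 ⟶ ModuleCat.of R X := P.π.f 0
  let π : P.complex.X 0 →ₗ[R] X := π₀.hom
  let d₁ := (P.complex.d 1 0).hom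
  let d₂ := (P.complex.d 2 1).hom
  have hπ : Function.Surjective π :=
    (ModuleCat.epi_iff_surjective π₀).1 (inferInstanceAs (Epi (P.π.f 0)))
  have hπd : π ∘ₗ d₁ = 0 := congrArg ModuleCat.Hom.hom P.complex_d_comp_π_f_zero
  have hdd : d₁ ∘ₗ d₂ = 0 := congrArg ModuleCat.Hom.hom (P.complex.d_comp_d 2 1 0)
  have hker_π : ker π ≤ range d₁ :=
    (ShortComplex.moduleCat_exact_iff_ker_sub_range _).1 P.exact₀
  have hpi (k : K) : p (i k) = 0 := by
    rw [← mem_ker, ← hip]; exact mem_range_self i k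
  obtain ⟨l, hl⟩ : ∃ l, p ∘ₗ l = π := by
    have : Epi (ModuleCat.ofHom p) := (ModuleCat.epi_iff_surjective _).2 hp
    exact ⟨_, congrArg ModuleCat.Hom.hom (Projective.factorThru_comp π₀ (ModuleCat.ofHom p))⟩
  obtain ⟨u, hu⟩ : ∃ u, i ∘ₗ u = l ∘ₗ d₁ := by
    refine exists_comp_eq_of_injective_of_range_le hi ?_
    rintro _ ⟨q, rfl⟩
    rw [hip, mem_ker, ← comp_apply, ← comp_assoc, hl, hπd, zero_apply]
  -- `φ ∘ u` is a 1-cocycle of the resolution, hence a coboundary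
  obtain ⟨b, hb⟩ := P.exists_d_comp_eq_of_isZero_ext hExt (ModuleCat.ofHom (φ ∘ₗ u)) <| by
    ext q
    have : i (u (d₂ q)) = i 0 := by
      rw [map_zero, ← comp_apply, hu]
      show l ((d₁ ∘ₗ d₂) q) = 0
      rw [hdd, zero_apply, map_zero]
    simp [d₂, hi this]
  replace hb : b.hom ∘ₗ d₁ = φ ∘ₗ u := congrArg ModuleCat.Hom.hom hb
  -- `E` is the pushout of `K ← P₁ → P₀`, so `φ` and `b` glue to a map on `E`
  obtain ⟨ψ, hψ⟩ := exists_comp_eq_of_surjective_of_ker_le (g := i.coprod l) (h := φ.coprod b.hom)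
    (by
      intro z
      obtain ⟨q, hq⟩ := hπ (p z)
      obtain ⟨k, hk⟩ : z - l q ∈ range i := by
        rw [hip, mem_ker, map_sub, ← comp_apply p, hl, hq, sub_self]
      exact ⟨(k, q), by simp [hk]⟩)
    (by
      rintro ⟨k, q⟩ hkq
      replace hkq : i k + l q = 0 := hkq
      obtain ⟨q', rfl⟩ : q ∈ range d₁ := hker_π <| by
        rw [mem_ker, ← hl, comp_apply, eq_neg_of_add_eq_zero_right hkq, map_neg, hpi, neg_zero]
      have : i k = i (-u q') := by
        rw [eq_neg_of_add_eq_zero_left hkq, map_neg, ← comp_apply i, hu, comp_apply]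
      rw [mem_ker, coprod_apply, hi this, ← comp_apply b.hom, hb]
      simp)
  exact ⟨ψ, by rw [← coprod_inl i l, ← comp_assoc, hψ, coprod_inl]⟩

theorem exists_submodule_comap_eq_ker_map_eq_range {f : K →ₗ[R] E} {g : E →ₗ[R] X}
    (hf : Function.Injective f) (hg : Function.Surjective g) (hfg : range f = ker g)
    {j : M' →ₗ[R] X} (hj : Function.Injective j) {φ : K →ₗ[R] Y} (hφ : Function.Surjective φ)
    (hExt : IsZero (((Ext R (ModuleCat.{u} R) 1).obj
      (op (ModuleCat.of R M'))).obj (ModuleCat.of R Y))) :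
    ∃ S : Submodule R E, S.comap f = ker φ ∧ S.map g = range j := by
  have hgf (k : K) : g (f k) = 0 := by rw [← mem_ker, ← hfg]; exact mem_range_self f k
  -- the pullback `Z = g⁻¹(j M')` is an extension of `M'` by `K`
  let Z := (range j).comap g
  let i : K →ₗ[R] Z := f.codRestrict Z fun k => by simp [Z, hgf]
  let p : Z →ₗ[R] M' :=
    (LinearEquiv.ofInjective j hj).symm.toLinearMap ∘ₗ g.restrict fun _ hz => hz
  have hpj : j ∘ₗ p = g ∘ₗ Z.subtype := by ext; simp [p]
  have hi : Function.Injective i := fun k k' h => hf (congrArg Subtype.val h)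
  have hp : Function.Surjective p := by
    intro x
    obtain ⟨e, he⟩ := hg (j x)
    refine ⟨⟨e, by simp [Z, he]⟩, hj ?_⟩
    rw [← comp_apply, hpj, comp_apply, Submodule.subtype_apply, he]
  have hip : range i = ker p := by
    ext z
    rw [mem_ker, ← hj.eq_iff, ← comp_apply, hpj, map_zero, comp_apply, ← mem_ker, ← hfg]
    exact ⟨fun ⟨k, hk⟩ => ⟨k, congrArg Subtype.val hk⟩, fun ⟨k, hk⟩ => ⟨k, Subtype.ext hk⟩⟩
  obtain ⟨ψ, hψ⟩ := exists_comp_eq_of_isZero_ext hExt hi hp hip φ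
  have hψi (k : K) : ψ (i k) = φ k := congrArg (· k) hψ
  have hpψ : (ker ψ).map p = ⊤ := by
    refine eq_top_iff.2 fun m _ => ?_
    obtain ⟨z, rfl⟩ := hp m
    obtain ⟨k, hk⟩ := hφ (ψ z)
    refine ⟨z - i k, by simp [hψi, hk], ?_⟩
    rw [map_sub, mem_ker.1 (hip ▸ mem_range_self i k : i k ∈ ker p), sub_zero]
  refine ⟨(ker ψ).map Z.subtype, ?_, ?_⟩
  · ext k
    simp only [Submodule.mem_comap, Submodule.mem_map, mem_ker, Submodule.subtype_apply]
    constructor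
    · rintro ⟨z, hz, hzk⟩
      rwa [← hψi, show i k = z from Subtype.ext hzk.symm]
    · exact fun hk => ⟨i k, by rw [hψi, hk], rfl⟩
  · rw [← Submodule.map_comp, ← hpj, Submodule.map_comp, hpψ, Submodule.map_top]

end LinearMap

open LinearMap in
/-- **Extensions of direct sums split along vanishing Ext¹.**
Let `R` be a commutative ring and `M₁, M₂, M₁', M₂'` be `R`-modules with
`Ext¹_R(M₁', M₂) = 0` and `Ext¹_R(M₂', M₁) = 0`. Then for every short exact sequence
`0 → M₁ ⊕ M₂ → E → M₁' ⊕ M₂' → 0`, the middle term `E` is isomorphic to a direct sum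
`E₁ ⊕ E₂`, where `E₁` fits in a short exact sequence `0 → M₁ → E₁ → M₁' → 0` and
`E₂` fits in a short exact sequence `0 → M₂ → E₂ → M₂' → 0`. -/
theorem extension_of_directSum_splits (R : Type u) [CommRing R]
    (M₁ M₂ M₁' M₂' : Type u)
    [AddCommGroup M₁] [Module R M₁] [AddCommGroup M₂] [Module R M₂]
    [AddCommGroup M₁'] [Module R M₁'] [AddCommGroup M₂'] [Module R M₂']
    (hExt₁ : IsZero (((Ext R (ModuleCat.{u} R) 1).obj
      (op (ModuleCat.of R M₁'))).obj (ModuleCat.of R M₂)))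
    (hExt₂ : IsZero (((Ext R (ModuleCat.{u} R) 1).obj
      (op (ModuleCat.of R M₂'))).obj (ModuleCat.of R M₁)))
    (E : Type u) [AddCommGroup E] [Module R E]
    (f : (M₁ × M₂) →ₗ[R] E) (g : E →ₗ[R] (M₁' × M₂'))
    (hf : Function.Injective f) (hg : Function.Surjective g)
    (hfg : LinearMap.range f = LinearMap.ker g) :
    ∃ (E₁ E₂ : ModuleCat.{u} R)
      (f₁ : ModuleCat.of R M₁ ⟶ E₁) (g₁ : E₁ ⟶ ModuleCat.of R M₁')
      (f₂ : ModuleCat.of R M₂ ⟶ E₂) (g₂ : E₂ ⟶ ModuleCat.of R M₂'),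
      Function.Injective f₁ ∧ Function.Surjective g₁ ∧
        LinearMap.range f₁.hom = LinearMap.ker g₁.hom ∧
      Function.Injective f₂ ∧ Function.Surjective g₂ ∧
        LinearMap.range f₂.hom = LinearMap.ker g₂.hom ∧
      Nonempty (E ≃ₗ[R] E₁ × E₂) := by
  obtain ⟨S₁, hS₁f, hS₁g⟩ := exists_submodule_comap_eq_ker_map_eq_range hf hg hfg
    inl_injective snd_surjective hExt₁
  obtain ⟨S₂, hS₂f, hS₂g⟩ := exists_submodule_comap_eq_ker_map_eq_range hf hg hfg
    inr_injective fst_surjective hExt₂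
  rw [ker_snd] at hS₁f
  rw [ker_fst] at hS₂f
  obtain ⟨f₁, g₁, hf₁, hg₁, hfg₁⟩ := exists_injective_surjective_range_eq_ker_of_comap_eq_of_map_eq
    hf hfg inl_injective (fst_comp_inl R M₁' M₂') hS₁f hS₁g
  obtain ⟨f₂, g₂, hf₂, hg₂, hfg₂⟩ := exists_injective_surjective_range_eq_ker_of_comap_eq_of_map_eq
    hf hfg inr_injective (snd_comp_inr R M₁' M₂') hS₂f hS₂g
  have hS : IsCompl S₁ S₂ := isCompl_of_isCompl_comap_of_isCompl_map hfg
    (hS₁f ▸ hS₂f ▸ isCompl_range_inl_inr) (hS₁g ▸ hS₂g ▸ isCompl_range_inl_inr)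
  exact ⟨.of R S₁, .of R S₂, ModuleCat.ofHom f₁, ModuleCat.ofHom g₁, ModuleCat.ofHom f₂,
    ModuleCat.ofHom g₂, hf₁, hg₁, hfg₁, hf₂, hg₂, hfg₂,
    ⟨(Submodule.prodEquivOfIsCompl S₁ S₂ hS).symm⟩⟩
end

section
/- Let R be a commutative regular coherent ring, and let W_1 and W_2 be wide subcategories of the category of finitely presented R-modules such that every module belonging to both W_1 and W_2 is the zero module. Then the full subcategory W_1 ⊔ W_2, whose objects are the R-modules isomorphic to M_1 ⊕ M_2 with M_1 in W_1 and M_2 in W_2, is again a wide subcategory of the category of finitely presented R-modules. -/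
/-!
If `A ∈ W₁` and `B ∈ W₂`, then `A ⊗ B` lies in both (a wide subcategory of finitely presented
modules is closed under `- ⊗ B` for finitely presented `B`, tensoring a presentation of `B`), so
`A ⊗ B = 0`, which for finitely generated modules forces `Ann A + Ann B = R`. Hence there are no
nonzero maps between objects of `W₁` and `W₂`, and kernels and cokernels of maps
`A₁ ⊕ A₂ → B₁ ⊕ B₂` are computed componentwise. For an extension of `B₁ ⊕ B₂` by `A₁ ⊕ A₂`, an
element `e` with `e ≡ 0` modulo `(Ann A₂ ∩ Ann B₂)²` and `e ≡ 1` modulo `(Ann A₁ ∩ Ann B₁)²` acts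
idempotently on the middle term, and multiplication by `e` splits the extension into one in `W₁`
and one in `W₂`.
-/

open CategoryTheory Limits Opposite Pretriangulated DirectSum

universe u

section Defs

variable (R : Type u) [CommRing R]

/-- A commutative ring is *coherent* if every finitely generated ideal is finitely
presented as an `R`-module. -/
def IsCoherentRing : Prop :=
  ∀ I : Ideal R, I.FG → Module.FinitePresentation R I

/-- `HasProjDimLE R n M` means that the module `M` admits a projective resolution of
length at most `n`. -/
def HasProjDimLE : ℕ → ModuleCat.{u} R → Prop
  | 0, M => Module.Projective R M
  | n + 1, M => ∃ (P : ModuleCat.{u} R) (f : P ⟶ M),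
      Module.Projective R P ∧ Function.Surjective f ∧
        HasProjDimLE n (ModuleCat.of R (LinearMap.ker f.hom))

/-- A module has finite projective dimension if it admits a finite projective resolution. -/
def HasFiniteProjDim (M : ModuleCat.{u} R) : Prop := ∃ n, HasProjDimLE R n M

/-- A commutative ring is *regular* if every finitely generated ideal has finite
projective dimension. -/
def IsRegularRing' : Prop :=
  ∀ I : Ideal R, I.FG → HasFiniteProjDim R (ModuleCat.of R I)

/-- `IsWideSubcategory R F W` : `W` is a wide subcategory of the full subcategory of
`R`-modules satisfying `F` (e.g. `F` = finitely presented, or finitely generated):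
it is a nonempty class of modules satisfying `F`, closed under isomorphisms, kernels,
cokernels and extensions. -/
structure IsWideSubcategory (F : ModuleCat.{u} R → Prop) (W : Set (ModuleCat.{u} R)) :
    Prop where
  prop_mem : ∀ M ∈ W, F M
  nonempty : W.Nonempty
  iso_mem : ∀ {M N : ModuleCat.{u} R}, (M ≅ N) → M ∈ W → N ∈ W
  ker_mem : ∀ {M N : ModuleCat.{u} R}, M ∈ W → N ∈ W → ∀ f : M ⟶ N,
      ModuleCat.of R (LinearMap.ker f.hom) ∈ W
  coker_mem : ∀ {M N : ModuleCat.{u} R}, M ∈ W → N ∈ W → ∀ f : M ⟶ N,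
      ModuleCat.of R (N ⧸ LinearMap.range f.hom) ∈ W
  ext_mem : ∀ S : ShortComplex (ModuleCat.{u} R), S.ShortExact →
      S.X₁ ∈ W → S.X₃ ∈ W → S.X₂ ∈ W

/-- The predicate "finitely presented" on modules. -/
def FP : ModuleCat.{u} R → Prop := fun M => Module.FinitePresentation R M

/-- The predicate "finitely generated" on modules. -/
def FG : ModuleCat.{u} R → Prop := fun M => Module.Finite R M

end Defs

open TensorProduct LinearMap

section Annihilator

variable {R : Type*} [CommRing R] {M N : Type*} [AddCommGroup M] [Module R M]
  [AddCommGroup N] [Module R N]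

theorem LinearMap.eq_zero_of_annihilator_sup_eq_top
    (h : Module.annihilator R M ⊔ Module.annihilator R N = ⊤) (f : M →ₗ[R] N) : f = 0 := by
  obtain ⟨a, ha, b, hb, hab⟩ := Submodule.mem_sup.mp (h ▸ Submodule.mem_top : (1 : R) ∈ _)
  ext x
  rw [zero_apply, ← one_smul R (f x), ← hab, add_smul, ← map_smul,
    Module.mem_annihilator.mp ha, Module.mem_annihilator.mp hb, map_zero, zero_add]

theorem Module.exists_linearMap_quotient_ne_zero [Module.Finite R M] (m : Ideal R) [m.IsMaximal]
    (h : annihilator R M ≤ m) : ∃ φ : M →ₗ[R] R ⧸ m, φ ≠ 0 := by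
  let := Ideal.Quotient.field m
  have : Nontrivial (M ⧸ (m • ⊤ : Submodule R M)) := by
    rw [← nonempty_support_iff (R := R), support_quotient]
    exact ⟨⟨m, inferInstance⟩, mem_support_iff_of_finite.mpr h,
      (PrimeSpectrum.mem_zeroLocus _ _).mpr subset_rfl⟩
  obtain ⟨v, hv⟩ := exists_ne (0 : M ⧸ (m • ⊤ : Submodule R M))
  obtain ⟨f, hf⟩ := Projective.exists_dual_ne_zero (R ⧸ m) hv
  obtain ⟨x, rfl⟩ := Submodule.mkQ_surjective _ v
  exact ⟨f.restrictScalars R ∘ₗ (m • ⊤ : Submodule R M).mkQ,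
    fun h0 => hf (by simpa using LinearMap.congr_fun h0 x)⟩

/-- For a maximal ideal `m ⊇ Ann M + Ann N`, nonzero maps `M → R ⧸ m` and `N → R ⧸ m` multiply
to a nonzero bilinear form on `M × N`, which cannot factor through `M ⊗ N = 0`. -/
theorem Module.annihilator_sup_annihilator_eq_top_of_subsingleton_tensorProduct
    [Module.Finite R M] [Module.Finite R N] [Subsingleton (M ⊗[R] N)] :
    annihilator R M ⊔ annihilator R N = ⊤ := by
  by_contra hne
  obtain ⟨m, hm, hle⟩ := Ideal.exists_le_maximal _ hne
  obtain ⟨φ, hφ⟩ := exists_linearMap_quotient_ne_zero m (le_sup_left.trans hle)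
  obtain ⟨ψ, hψ⟩ := exists_linearMap_quotient_ne_zero m (le_sup_right.trans hle)
  obtain ⟨x, hx⟩ := DFunLike.ne_iff.mp hφ
  obtain ⟨y, hy⟩ := DFunLike.ne_iff.mp hψ
  have h0 : lift ((LinearMap.mul R (R ⧸ m)).compl₁₂ φ ψ) (x ⊗ₜ y) = 0 := by
    rw [Subsingleton.elim (x ⊗ₜ[R] y) 0, map_zero]
  exact mul_ne_zero hx hy (by simpa using h0)

end Annihilator

section SmulIdempotent

variable {R : Type*} [CommRing R] {M A B : Type*} [AddCommGroup M] [Module R M]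
  [AddCommGroup A] [Module R A] [AddCommGroup B] [Module R B] {e : R}

theorem isIdempotentElem_lsmul (he : e * (1 - e) ∈ Module.annihilator R M) :
    IsIdempotentElem (lsmul R M e) := by
  ext x
  have hx := Module.mem_annihilator.mp he x
  rw [mul_sub, mul_one, sub_smul, sub_eq_zero] at hx
  change e • e • x = e • x
  rw [smul_smul, ← hx]

theorem LinearMap.map_mem_range_lsmul (f : M →ₗ[R] A) {x : M} (hx : x ∈ range (lsmul R M e)) :
    f x ∈ range (lsmul R A e) := by
  obtain ⟨y, rfl⟩ := hx
  exact ⟨f y, by simp⟩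

noncomputable def rangeLsmulProdEquiv (he : e * (1 - e) ∈ Module.annihilator R M) :
    (range (lsmul R M e) × range (lsmul R M (1 - e))) ≃ₗ[R] M :=
  Submodule.prodEquivOfIsCompl _ _ <| by
    have hp := isIdempotentElem_lsmul he
    convert hp.isCompl
    rw [hp.ker_eq_range_one_sub]
    congr 1
    ext x
    simp

theorem range_lsmul_prod_eq_range_inl (hA : 1 - e ∈ Module.annihilator R A)
    (hB : e ∈ Module.annihilator R B) :
    range (lsmul R (A × B) e) = range (inl R A B) := by
  have hA' : ∀ a : A, e • a = a := fun a => by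
    simpa [sub_smul, sub_eq_zero, eq_comm] using Module.mem_annihilator.mp hA a
  ext ⟨a, b⟩
  constructor
  · rintro ⟨⟨a', b'⟩, h⟩
    simp only [lsmul_apply, Prod.smul_mk, Prod.mk.injEq] at h
    exact ⟨a, by simp [← h.2, Module.mem_annihilator.mp hB]⟩
  · rintro ⟨a', h⟩
    exact ⟨(a', 0), by simp [← h, hA']⟩

noncomputable def rangeLsmulEquivOfEquivProd (φ : M ≃ₗ[R] A × B)
    (hA : 1 - e ∈ Module.annihilator R A) (hB : e ∈ Module.annihilator R B) :
    range (lsmul R M e) ≃ₗ[R] A :=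
  (φ.ofSubmodules _ _ <| by
    rw [← range_lsmul_prod_eq_range_inl hA hB, ← LinearMap.range_comp,
      ← φ.range_comp (lsmul R (A × B) e)]
    congr 1
    exact LinearMap.ext fun x => by simp).trans (LinearEquiv.ofInjective _ inl_injective).symm

end SmulIdempotent

namespace CategoryTheory.ShortComplex

variable {R : Type u} [CommRing R] {S : ShortComplex (ModuleCat.{u} R)}

theorem ShortExact.annihilator_mul_le (hS : S.ShortExact) :
    Module.annihilator R S.X₁ * Module.annihilator R S.X₃ ≤ Module.annihilator R S.X₂ := by
  refine Submodule.mul_le.mpr fun r hr s hs => Module.mem_annihilator.mpr fun x => ?_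
  obtain ⟨z, hz⟩ := (S.moduleCat_exact_iff.mp hS.exact) (s • x)
    (by rw [map_smul, Module.mem_annihilator.mp hs])
  rw [mul_smul, ← hz, ← map_smul, Module.mem_annihilator.mp hr, map_zero]

variable (S) in
noncomputable def rangeLsmul (e : R) : ShortComplex (ModuleCat.{u} R) where
  X₁ := ModuleCat.of R (range (lsmul R S.X₁ e))
  X₂ := ModuleCat.of R (range (lsmul R S.X₂ e))
  X₃ := ModuleCat.of R (range (lsmul R S.X₃ e))
  f := ModuleCat.ofHom (S.f.hom.restrict fun _ => S.f.hom.map_mem_range_lsmul)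
  g := ModuleCat.ofHom (S.g.hom.restrict fun _ => S.g.hom.map_mem_range_lsmul)
  zero := by
    ext x
    exact LinearMap.congr_fun (congrArg ModuleCat.Hom.hom S.zero) x.1

theorem ShortExact.rangeLsmul (hS : S.ShortExact) {e : R}
    (he : e * (1 - e) ∈ Module.annihilator R S.X₂) : (S.rangeLsmul e).ShortExact where
  exact := by
    refine (moduleCat_exact_iff _).mpr fun ⟨x, hx⟩ hgx => ?_
    obtain ⟨z, rfl⟩ := (S.moduleCat_exact_iff.mp hS.exact) x (congrArg Subtype.val hgx)
    refine ⟨⟨e • z, z, rfl⟩, Subtype.ext ?_⟩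
    change S.f (e • z) = S.f z
    rw [map_smul, ← lsmul_apply, ← (isIdempotentElem_lsmul he).mem_range_iff]
    exact hx
  mono_f := (ModuleCat.mono_iff_injective _).mpr fun x y hxy =>
    Subtype.ext (hS.moduleCat_injective_f (congrArg Subtype.val hxy))
  epi_g := (ModuleCat.epi_iff_surjective _).mpr fun ⟨_, y, rfl⟩ => by
    obtain ⟨x, rfl⟩ := hS.moduleCat_surjective_g y
    exact ⟨⟨e • x, x, rfl⟩, Subtype.ext (map_smul S.g.hom e x)⟩

end CategoryTheory.ShortComplex

section Prod

variable {R : Type*} [CommRing R] {M₁ M₂ N₁ N₂ : Type*} [AddCommGroup M₁] [Module R M₁]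
  [AddCommGroup M₂] [Module R M₂] [AddCommGroup N₁] [Module R N₁] [AddCommGroup N₂] [Module R N₂]

theorem LinearMap.eq_prodMap_of_comp_inl_eq_zero_of_comp_inr_eq_zero
    (g : M₁ × M₂ →ₗ[R] N₁ × N₂) (h₁₂ : snd R N₁ N₂ ∘ₗ g ∘ₗ inl R M₁ M₂ = 0)
    (h₂₁ : fst R N₁ N₂ ∘ₗ g ∘ₗ inr R M₁ M₂ = 0) :
    g = prodMap (fst R N₁ N₂ ∘ₗ g ∘ₗ inl R M₁ M₂) (snd R N₁ N₂ ∘ₗ g ∘ₗ inr R M₁ M₂) := by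
  ext x
  · simp
  · exact (LinearMap.congr_fun h₁₂ x).trans (map_zero (snd R N₁ N₂ ∘ₗ g ∘ₗ inr R M₁ M₂)).symm
  · exact (LinearMap.congr_fun h₂₁ x).trans (map_zero (fst R N₁ N₂ ∘ₗ g ∘ₗ inl R M₁ M₂)).symm
  · simp

def Submodule.prodEquiv (p : Submodule R M₁) (q : Submodule R M₂) : p.prod q ≃ₗ[R] p × q where
  toFun x := (⟨x.1.1, x.2.1⟩, ⟨x.1.2, x.2.2⟩)
  invFun y := ⟨(y.1.1, y.2.1), y.1.2, y.2.2⟩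
  map_add' _ _ := rfl
  map_smul' _ _ := rfl
  left_inv _ := rfl
  right_inv _ := rfl

noncomputable def Submodule.quotientProdEquiv (p : Submodule R M₁) (q : Submodule R M₂) :
    ((M₁ × M₂) ⧸ p.prod q) ≃ₗ[R] (M₁ ⧸ p) × (M₂ ⧸ q) :=
  (quotEquivOfEq _ _ (by rw [ker_prodMap, ker_mkQ, ker_mkQ])).trans
    ((prodMap p.mkQ q.mkQ).quotKerEquivOfSurjective (p.mkQ_surjective.prodMap q.mkQ_surjective))

end Prod

namespace IsWideSubcategory

variable {R : Type u} [CommRing R] {F : ModuleCat.{u} R → Prop} {W : Set (ModuleCat.{u} R)}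

theorem mem_of_subsingleton (hW : IsWideSubcategory R F W) (M : ModuleCat.{u} R)
    [Subsingleton M] : M ∈ W := by
  obtain ⟨M₀, hM₀⟩ := hW.nonempty
  have : Subsingleton (ker (𝟙 M₀ : M₀ ⟶ M₀).hom) := by
    rw [ModuleCat.hom_id, ker_id]
    infer_instance
  exact hW.iso_mem (LinearEquiv.ofSubsingleton _ _).toModuleIso (hW.ker_mem hM₀ hM₀ (𝟙 M₀))

theorem prod_mem (hW : IsWideSubcategory R F W) {M N : ModuleCat.{u} R} (hM : M ∈ W)
    (hN : N ∈ W) : ModuleCat.of R (M × N) ∈ W :=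
  hW.ext_mem (ModuleCat.shortComplexOfCompEqZero (inl R M N) (snd R M N) (snd_comp_inl R M N))
    (ModuleCat.shortComplex_shortExact _ Function.Exact.inl_snd inl_injective snd_surjective)
    hM hN

theorem pi_mem (hW : IsWideSubcategory R F W) {M : ModuleCat.{u} R} (hM : M ∈ W) :
    ∀ n : ℕ, ModuleCat.of R (Fin n → M) ∈ W
  | 0 => hW.mem_of_subsingleton _
  | n + 1 => hW.iso_mem (Fin.consLinearEquiv R fun _ => M).toModuleIso
      (hW.prod_mem hM (hW.pi_mem hM n))

theorem tensorProduct_mem (hW : IsWideSubcategory R F W) {A : ModuleCat.{u} R} (hA : A ∈ W)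
    (B : Type u) [AddCommGroup B] [Module R B] [Module.FinitePresentation R B] :
    ModuleCat.of R (A ⊗[R] B) ∈ W := by
  obtain ⟨n, m, π, φ, hπ, hφπ⟩ := Module.FinitePresentation.exists_fin' R B
  have hfree (k : ℕ) : ModuleCat.of R (A ⊗[R] (Fin k → R)) ∈ W :=
    hW.iso_mem (piScalarRight R R A (Fin k)).symm.toModuleIso (hW.pi_mem hA k)
  exact hW.iso_mem (lTensor.equiv A hφπ hπ).toModuleIso
    (hW.coker_mem (hfree m) (hfree n) (ModuleCat.ofHom (φ.lTensor A)))

variable {W₁ W₂ : Set (ModuleCat.{u} R)}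

theorem annihilator_sup_eq_top (h₁ : IsWideSubcategory R (FP R) W₁)
    (h₂ : IsWideSubcategory R (FP R) W₂) (hzero : ∀ M ∈ W₁ ∩ W₂, Subsingleton M)
    {A B : ModuleCat.{u} R} (hA : A ∈ W₁) (hB : B ∈ W₂) :
    Module.annihilator R A ⊔ Module.annihilator R B = ⊤ := by
  have : Module.FinitePresentation R A := h₁.prop_mem A hA
  have : Module.FinitePresentation R B := h₂.prop_mem B hB
  have : Subsingleton (A ⊗[R] B) := hzero (ModuleCat.of R (A ⊗[R] B))
    ⟨h₁.tensorProduct_mem hA B,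
      h₂.iso_mem (TensorProduct.comm R B A).toModuleIso (h₂.tensorProduct_mem hB A)⟩
  exact Module.annihilator_sup_annihilator_eq_top_of_subsingleton_tensorProduct


theorem range_lsmul_mem (hW : IsWideSubcategory R F W) {S : ShortComplex (ModuleCat.{u} R)}
    (hS : S.ShortExact) {e : R} (he : e * (1 - e) ∈ Module.annihilator R S.X₂)
    {A B : ModuleCat.{u} R} {A' B' : Type*} [AddCommGroup A'] [Module R A'] [AddCommGroup B']
    [Module R B'] (hA : A ∈ W) (hB : B ∈ W) (eA : S.X₁ ≃ₗ[R] A × A') (eB : S.X₃ ≃ₗ[R] B × B')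
    (h₁ : 1 - e ∈ Module.annihilator R A ⊓ Module.annihilator R B)
    (h₀ : e ∈ Module.annihilator R A' ⊓ Module.annihilator R B') :
    ModuleCat.of R (range (lsmul R S.X₂ e)) ∈ W :=
  hW.ext_mem _ (hS.rangeLsmul he)
    (hW.iso_mem (rangeLsmulEquivOfEquivProd eA h₁.1 h₀.1).symm.toModuleIso hA)
    (hW.iso_mem (rangeLsmulEquivOfEquivProd eB h₁.2 h₀.2).symm.toModuleIso hB)

theorem exists_prodMap_eq (h₁ : IsWideSubcategory R (FP R) W₁)
    (h₂ : IsWideSubcategory R (FP R) W₂) (hzero : ∀ M ∈ W₁ ∩ W₂, Subsingleton M)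
    {A₁ B₁ A₂ B₂ : ModuleCat.{u} R} (hA₁ : A₁ ∈ W₁) (hB₁ : B₁ ∈ W₁) (hA₂ : A₂ ∈ W₂)
    (hB₂ : B₂ ∈ W₂) (g : A₁ × A₂ →ₗ[R] B₁ × B₂) : ∃ g₁ g₂, g = prodMap g₁ g₂ :=
  ⟨_, _, g.eq_prodMap_of_comp_inl_eq_zero_of_comp_inr_eq_zero
    (eq_zero_of_annihilator_sup_eq_top (h₁.annihilator_sup_eq_top h₂ hzero hA₁ hB₂) _)
    (eq_zero_of_annihilator_sup_eq_top
      ((sup_comm _ _).trans (h₁.annihilator_sup_eq_top h₂ hzero hB₁ hA₂)) _)⟩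

end IsWideSubcategory

def coprodClass {R : Type u} [CommRing R] (W₁ W₂ : Set (ModuleCat.{u} R)) :
    Set (ModuleCat.{u} R) :=
  {M | ∃ M₁ ∈ W₁, ∃ M₂ ∈ W₂, Nonempty (M ≃ₗ[R] M₁ × M₂)}

namespace IsWideSubcategory

variable {R : Type u} [CommRing R] {W₁ W₂ : Set (ModuleCat.{u} R)}

theorem prop_mem_coprodClass (h₁ : IsWideSubcategory R (FP R) W₁)
    (h₂ : IsWideSubcategory R (FP R) W₂) : ∀ M ∈ coprodClass W₁ W₂, FP R M := by
  rintro M ⟨M₁, hM₁, M₂, hM₂, ⟨e⟩⟩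
  have : Module.FinitePresentation R M₁ := h₁.prop_mem M₁ hM₁
  have : Module.FinitePresentation R M₂ := h₂.prop_mem M₂ hM₂
  exact Module.FinitePresentation.of_equiv e.symm

theorem ker_mem_coprodClass (h₁ : IsWideSubcategory R (FP R) W₁)
    (h₂ : IsWideSubcategory R (FP R) W₂) (hzero : ∀ M ∈ W₁ ∩ W₂, Subsingleton M)
    {M N : ModuleCat.{u} R} (hM : M ∈ coprodClass W₁ W₂) (hN : N ∈ coprodClass W₁ W₂)
    (f : M ⟶ N) : ModuleCat.of R (ker f.hom) ∈ coprodClass W₁ W₂ := by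
  obtain ⟨A₁, hA₁, A₂, hA₂, ⟨eM⟩⟩ := hM
  obtain ⟨B₁, hB₁, B₂, hB₂, ⟨eN⟩⟩ := hN
  obtain ⟨g₁, g₂, hg⟩ := h₁.exists_prodMap_eq h₂ hzero hA₁ hB₁ hA₂ hB₂
    (eN.toLinearMap ∘ₗ f.hom ∘ₗ eM.symm.toLinearMap)
  have hker : (ker f.hom).map eM.toLinearMap = (ker g₁).prod (ker g₂) := by
    rw [← ker_prodMap, ← hg, LinearEquiv.ker_comp, ker_comp, Submodule.comap_equiv_eq_map_symm,
      LinearEquiv.symm_symm]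
  exact ⟨_, h₁.ker_mem hA₁ hB₁ (ModuleCat.ofHom g₁), _, h₂.ker_mem hA₂ hB₂ (ModuleCat.ofHom g₂),
    ⟨(eM.ofSubmodules _ _ hker).trans (Submodule.prodEquiv _ _)⟩⟩

theorem coker_mem_coprodClass (h₁ : IsWideSubcategory R (FP R) W₁)
    (h₂ : IsWideSubcategory R (FP R) W₂) (hzero : ∀ M ∈ W₁ ∩ W₂, Subsingleton M)
    {M N : ModuleCat.{u} R} (hM : M ∈ coprodClass W₁ W₂) (hN : N ∈ coprodClass W₁ W₂)
    (f : M ⟶ N) : ModuleCat.of R (N ⧸ range f.hom) ∈ coprodClass W₁ W₂ := by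
  obtain ⟨A₁, hA₁, A₂, hA₂, ⟨eM⟩⟩ := hM
  obtain ⟨B₁, hB₁, B₂, hB₂, ⟨eN⟩⟩ := hN
  obtain ⟨g₁, g₂, hg⟩ := h₁.exists_prodMap_eq h₂ hzero hA₁ hB₁ hA₂ hB₂
    (eN.toLinearMap ∘ₗ f.hom ∘ₗ eM.symm.toLinearMap)
  have hrange : (range f.hom).map eN.toLinearMap = (range g₁).prod (range g₂) := by
    rw [← range_prodMap, ← hg, range_comp, range_comp_of_range_eq_top _ eM.symm.range]
  exact ⟨_, h₁.coker_mem hA₁ hB₁ (ModuleCat.ofHom g₁), _,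
    h₂.coker_mem hA₂ hB₂ (ModuleCat.ofHom g₂),
    ⟨(Submodule.Quotient.equiv _ _ eN hrange).trans (Submodule.quotientProdEquiv _ _)⟩⟩

theorem ext_mem_coprodClass (h₁ : IsWideSubcategory R (FP R) W₁)
    (h₂ : IsWideSubcategory R (FP R) W₂) (hzero : ∀ M ∈ W₁ ∩ W₂, Subsingleton M)
    (S : ShortComplex (ModuleCat.{u} R)) (hS : S.ShortExact) (hS₁ : S.X₁ ∈ coprodClass W₁ W₂)
    (hS₃ : S.X₃ ∈ coprodClass W₁ W₂) : S.X₂ ∈ coprodClass W₁ W₂ := by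
  obtain ⟨A₁, hA₁, A₂, hA₂, ⟨eA⟩⟩ := hS₁
  obtain ⟨B₁, hB₁, B₂, hB₂, ⟨eB⟩⟩ := hS₃
  set I₁ := Module.annihilator R A₁ ⊓ Module.annihilator R B₁
  set I₂ := Module.annihilator R A₂ ⊓ Module.annihilator R B₂
  have hI : I₁ ⊔ I₂ = ⊤ := by
    simpa only [Module.annihilator_prod] using
      h₁.annihilator_sup_eq_top h₂ hzero (h₁.prod_mem hA₁ hB₁) (h₂.prod_mem hA₂ hB₂)
  obtain ⟨i, hi, e, he, hie⟩ := Submodule.mem_sup.mp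
    ((Ideal.sup_pow_eq_top (Ideal.pow_sup_eq_top hI)).symm ▸ Submodule.mem_top :
      (1 : R) ∈ I₁ ^ 2 ⊔ I₂ ^ 2)
  obtain rfl : i = 1 - e := eq_sub_of_add_eq hie
  have hX₁ : I₁ * I₂ ≤ Module.annihilator R S.X₁ := by
    rw [eA.annihilator_eq, Module.annihilator_prod]
    exact Ideal.mul_le_inf.trans (inf_le_inf inf_le_left inf_le_left)
  have hX₃ : I₁ * I₂ ≤ Module.annihilator R S.X₃ := by
    rw [eB.annihilator_eq, Module.annihilator_prod]
    exact Ideal.mul_le_inf.trans (inf_le_inf inf_le_right inf_le_right)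
  have hidem : e * (1 - e) ∈ Module.annihilator R S.X₂ := by
    -- `I₁ * I₂` only kills the outer terms, whence the squares.
    have hsq : I₂ ^ 2 * I₁ ^ 2 = (I₁ * I₂) * (I₁ * I₂) := by ring
    exact hS.annihilator_mul_le (Ideal.mul_mono hX₁ hX₃ (hsq ▸ Ideal.mul_mem_mul he hi))
  have hi₁ : 1 - e ∈ I₁ := Ideal.pow_le_self two_ne_zero hi
  have he₂ : e ∈ I₂ := Ideal.pow_le_self two_ne_zero he
  refine ⟨_, h₁.range_lsmul_mem hS hidem hA₁ hB₁ eA eB hi₁ he₂, _,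
    h₂.range_lsmul_mem hS (by rwa [sub_sub_cancel, mul_comm]) hA₂ hB₂
      (eA.trans (LinearEquiv.prodComm R _ _)) (eB.trans (LinearEquiv.prodComm R _ _))
      ((sub_sub_cancel 1 e).symm ▸ he₂) hi₁,
    ⟨(rangeLsmulProdEquiv hidem).symm⟩⟩

end IsWideSubcategory

theorem coprod_of_wide_isWide_general (R : Type u) [CommRing R]
    (W₁ W₂ : Set (ModuleCat.{u} R))
    (h₁ : IsWideSubcategory R (FP R) W₁) (h₂ : IsWideSubcategory R (FP R) W₂)
    (hzero : ∀ M ∈ W₁ ∩ W₂, Subsingleton M) :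
    IsWideSubcategory R (FP R)
      {M : ModuleCat.{u} R | ∃ M₁ ∈ W₁, ∃ M₂ ∈ W₂, Nonempty (M ≃ₗ[R] M₁ × M₂)} := by
  obtain ⟨M₁, hM₁⟩ := h₁.nonempty
  obtain ⟨M₂, hM₂⟩ := h₂.nonempty
  exact
    { prop_mem := h₁.prop_mem_coprodClass h₂
      nonempty := ⟨ModuleCat.of R (M₁ × M₂), M₁, hM₁, M₂, hM₂, ⟨LinearEquiv.refl R _⟩⟩
      iso_mem := fun i ⟨A₁, hA₁, A₂, hA₂, ⟨e⟩⟩ =>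
        ⟨A₁, hA₁, A₂, hA₂, ⟨i.symm.toLinearEquiv.trans e⟩⟩
      ker_mem := h₁.ker_mem_coprodClass h₂ hzero
      coker_mem := h₁.coker_mem_coprodClass h₂ hzero
      ext_mem := h₁.ext_mem_coprodClass h₂ hzero }

/-- **Coproduct of disjoint wide subcategories is wide (Proposition 3.4 / prop:0).**
Let `R` be a commutative regular coherent ring and `W₁`, `W₂` wide subcategories of the
category of finitely presented `R`-modules such that every module belonging to both is
zero. Then the full subcategory `W₁ ⊔ W₂` of modules isomorphic to `M₁ ⊕ M₂` with
`M₁ ∈ W₁` and `M₂ ∈ W₂` is again a wide subcategory of finitely presented modules. -/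
theorem coprod_of_wide_isWide (R : Type u) [CommRing R]
    (hcoh : IsCoherentRing R) (hreg : IsRegularRing' R)
    (W₁ W₂ : Set (ModuleCat.{u} R))
    (h₁ : IsWideSubcategory R (FP R) W₁) (h₂ : IsWideSubcategory R (FP R) W₂)
    (hzero : ∀ M ∈ W₁ ∩ W₂, Subsingleton M) :
    IsWideSubcategory R (FP R)
      {M : ModuleCat.{u} R | ∃ M₁ ∈ W₁, ∃ M₂ ∈ W₂, Nonempty (M ≃ₗ[R] M₁ × M₂)} :=
  coprod_of_wide_isWide_general R W₁ W₂ h₁ h₂ hzero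
end

section
/- Let R be a commutative regular coherent ring and let A be a thick support of Spec(R) that is the union A = A_1 ∪ A_2 of two disjoint thick supports A_1 and A_2. Then every finitely presented R-module M with Supp(M) ⊆ A is isomorphic to a direct sum M_1 ⊕ M_2 of finitely presented R-modules with Supp(M_1) ⊆ A_1 and Supp(M_2) ⊆ A_2; that is, the wide subcategory W_A = { finitely presented M : Supp(M) ⊆ A } decomposes as W_A = W_{A_1} ⊔ W_{A_2}. -/
open CategoryTheory Limits Opposite Pretriangulated DirectSum

universe u

section Thick

variable (R : Type u) [CommRing R]

/-- A *thick support* in `Spec R`: a union of Zariski closed sets `V(I)` with `I` a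
finitely generated ideal. -/
def IsThickSupport (A : Set (PrimeSpectrum R)) : Prop :=
  ∃ 𝒮 : Set (Ideal R), (∀ I ∈ 𝒮, I.FG) ∧
    A = ⋃ I ∈ 𝒮, PrimeSpectrum.zeroLocus (I : Set R)

/-- A *specialization closed* subset of `Spec R`: a union of Zariski closed sets. -/
def IsSpclClosed (A : Set (PrimeSpectrum R)) : Prop :=
  ∃ 𝒮 : Set (Ideal R), A = ⋃ I ∈ 𝒮, PrimeSpectrum.zeroLocus (I : Set R)

/-- An indecomposable thick support: nonempty and admitting no decomposition into two
disjoint nonempty thick supports. -/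
def IsIndecompThickSupport (A : Set (PrimeSpectrum R)) : Prop :=
  IsThickSupport R A ∧ A.Nonempty ∧
  ∀ A₁ A₂ : Set (PrimeSpectrum R), IsThickSupport R A₁ → IsThickSupport R A₂ →
    Disjoint A₁ A₂ → A = A₁ ∪ A₂ → A₁ = ∅ ∨ A₂ = ∅

/-- An indecomposable specialization closed subset: nonempty and admitting no
decomposition into two disjoint nonempty specialization closed subsets. -/
def IsIndecompSpclClosed (A : Set (PrimeSpectrum R)) : Prop :=
  IsSpclClosed R A ∧ A.Nonempty ∧
  ∀ A₁ A₂ : Set (PrimeSpectrum R), IsSpclClosed R A₁ → IsSpclClosed R A₂ →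
    Disjoint A₁ A₂ → A = A₁ ∪ A₂ → A₁ = ∅ ∨ A₂ = ∅

/-- A Krull-Schmidt thick decomposition of a thick support `A`: a family of pairwise
disjoint indecomposable thick supports with union `A`, unique up to permutation. -/
def IsKSThickDecomp (A : Set (PrimeSpectrum R)) {ι : Type u}
    (𝒜 : ι → Set (PrimeSpectrum R)) : Prop :=
  (∀ i, IsIndecompThickSupport R (𝒜 i)) ∧ Pairwise (Function.onFun Disjoint 𝒜) ∧
  (⋃ i, 𝒜 i) = A ∧
  ∀ (κ : Type u) (ℬ : κ → Set (PrimeSpectrum R)),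
    (∀ k, IsIndecompThickSupport R (ℬ k)) → Pairwise (Function.onFun Disjoint ℬ) →
    (⋃ k, ℬ k) = A → ∃ σ : ι ≃ κ, ∀ i, 𝒜 i = ℬ (σ i)

end Thick

/-!
For finitely presented `M`, `Supp M = V(Ann M)` is closed, hence quasi-compact in the
constructible topology of `Spec R`, in which every `V(I)` with `I` finitely generated is open.
So finitely many of the `V(I)` making up `A₁` and `A₂` already cover `Supp M`: there are finitely
generated `q₁, q₂` with `V(qᵢ) ⊆ Aᵢ` and `Supp M ⊆ V(q₁) ∪ V(q₂)`. Disjointness of `A₁` and `A₂`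
makes `q₁` and `q₂` coprime, and some power of `q₁ q₂` kills `M`. By the Chinese remainder
theorem `M` is then the direct sum of its `q₁ⁿ`- and `q₂ⁿ`-torsion submodules, which are finitely
presented as direct summands of `M`.
-/

open Topology

namespace PrimeSpectrum

variable {R : Type*} [CommRing R]

lemma isOpen_constructibleTopology_zeroLocus_of_fg {I : Ideal R} (hI : I.FG) :
    IsOpen[constructibleTopology (PrimeSpectrum R)] (zeroLocus I) :=
  (isCompact_isOpen_iff_ideal.mpr ⟨I, hI, rfl⟩).1.isOpen_constructibleTopology_of_isClosed
    (isClosed_zeroLocus _)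

lemma isClosed_constructibleTopology_zeroLocus (s : Set R) :
    IsClosed[constructibleTopology (PrimeSpectrum R)] (zeroLocus s) := by
  rw [← Set.biUnion_of_singleton s, zeroLocus_iUnion₂]
  refine @isClosed_biInter _ _ (constructibleTopology _) _ _ fun f _ => ?_
  rw [← @isOpen_compl_iff _ _ (constructibleTopology _), ← basicOpen_eq_zeroLocus_compl]
  exact (isCompact_basicOpen f).isOpen_constructibleTopology_of_isOpen (basicOpen f).2

lemma exists_finite_zeroLocus_subset_biUnion {s : Set R} {𝒮 : Set (Ideal R)}
    (hfg : ∀ I ∈ 𝒮, I.FG) (hs : zeroLocus s ⊆ ⋃ I ∈ 𝒮, zeroLocus I) :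
    ∃ 𝒯 ⊆ 𝒮, 𝒯.Finite ∧ zeroLocus s ⊆ ⋃ I ∈ 𝒯, zeroLocus I := by
  let c (t : Set R) : Set (WithConstructibleTopology (PrimeSpectrum R)) :=
    WithTopology.ofTopology ⁻¹' zeroLocus t
  have hcpt : IsCompact (c s) :=
    (WithConstructibleTopology.isClosed_iff (s := c s)).mpr
      (isClosed_constructibleTopology_zeroLocus s) |>.isCompact
  have hcov : c s ⊆ ⋃ I ∈ 𝒮, c (I : Set R) := by
    simpa only [c, Set.preimage_iUnion₂] using Set.preimage_mono hs
  obtain ⟨𝒯, h𝒯𝒮, h𝒯, hcov𝒯⟩ := hcpt.elim_finite_subcover_image (fun (I : Ideal R) hI =>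
    (WithConstructibleTopology.isOpen_iff (s := c I)).mpr
      (isOpen_constructibleTopology_zeroLocus_of_fg (hfg I hI))) hcov
  refine ⟨𝒯, h𝒯𝒮, h𝒯, fun x hx => ?_⟩
  obtain ⟨I, hI, hxI⟩ := Set.mem_iUnion₂.mp (hcov𝒯 (a := WithTopology.toTopology _ x) hx)
  exact Set.mem_biUnion hI hxI

lemma exists_fg_zeroLocus_eq_biUnion {𝒯 : Set (Ideal R)} (h𝒯 : 𝒯.Finite)
    (hfg : ∀ I ∈ 𝒯, I.FG) :
    ∃ q : Ideal R, q.FG ∧ zeroLocus (q : Set R) = ⋃ I ∈ 𝒯, zeroLocus (I : Set R) := by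
  induction 𝒯, h𝒯 using Set.Finite.induction_on with
  | empty => exact ⟨⊤, Ideal.fg_top R, by simp⟩
  | @insert I 𝒯 _ _ ih =>
    obtain ⟨q, hq, hq𝒯⟩ := ih fun J hJ => hfg J (Set.mem_insert_of_mem I hJ)
    refine ⟨I * q, (hfg I (Set.mem_insert I 𝒯)).mul hq, ?_⟩
    rw [zeroLocus_mul, hq𝒯, Set.biUnion_insert]

end PrimeSpectrum

open PrimeSpectrum

section ThickSupport

variable {R : Type*} [CommRing R] {A₁ A₂ : Set (PrimeSpectrum R)}

lemma IsThickSupport.exists_fg_of_zeroLocus_subset_union (h₁ : IsThickSupport R A₁)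
    (h₂ : IsThickSupport R A₂) {s : Set R} (hs : zeroLocus s ⊆ A₁ ∪ A₂) :
    ∃ q₁ q₂ : Ideal R, q₁.FG ∧ q₂.FG ∧ zeroLocus q₁ ⊆ A₁ ∧ zeroLocus q₂ ⊆ A₂ ∧
      zeroLocus s ⊆ zeroLocus q₁ ∪ zeroLocus q₂ := by
  obtain ⟨𝒮₁, hfg₁, rfl⟩ := h₁
  obtain ⟨𝒮₂, hfg₂, rfl⟩ := h₂
  rw [← Set.biUnion_union] at hs
  obtain ⟨𝒯, h𝒯𝒮, h𝒯, hs𝒯⟩ := exists_finite_zeroLocus_subset_biUnion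
    (fun I hI => hI.elim (hfg₁ I) (hfg₂ I)) hs
  obtain ⟨q₁, hq₁, hV₁⟩ := exists_fg_zeroLocus_eq_biUnion (h𝒯.inter_of_left 𝒮₁)
    fun I hI => hfg₁ I hI.2
  obtain ⟨q₂, hq₂, hV₂⟩ := exists_fg_zeroLocus_eq_biUnion (h𝒯.inter_of_left 𝒮₂)
    fun I hI => hfg₂ I hI.2
  refine ⟨q₁, q₂, hq₁, hq₂, hV₁ ▸ Set.biUnion_mono Set.inter_subset_right fun _ _ => le_rfl,
    hV₂ ▸ Set.biUnion_mono Set.inter_subset_right fun _ _ => le_rfl, ?_⟩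
  rwa [hV₁, hV₂, ← Set.biUnion_union, ← Set.inter_union_distrib_left,
    Set.inter_eq_left.mpr h𝒯𝒮]

lemma IsThickSupport.exists_sup_eq_top_inf_le_of_zeroLocus_subset (h₁ : IsThickSupport R A₁)
    (h₂ : IsThickSupport R A₂) (hdisj : Disjoint A₁ A₂) {J : Ideal R}
    (hJ : zeroLocus J ⊆ A₁ ∪ A₂) :
    ∃ I₁ I₂ : Ideal R, I₁ ⊔ I₂ = ⊤ ∧ I₁ ⊓ I₂ ≤ J ∧ zeroLocus I₁ ⊆ A₁ ∧ zeroLocus I₂ ⊆ A₂ := by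
  obtain ⟨q₁, q₂, hq₁, hq₂, hV₁, hV₂, hJq⟩ := h₁.exists_fg_of_zeroLocus_subset_union h₂ hJ
  have hcop : IsCoprime q₁ q₂ := by
    rw [Ideal.isCoprime_iff_sup_eq, ← zeroLocus_empty_iff_eq_top, zeroLocus_sup,
      ← Set.disjoint_iff_inter_eq_empty]
    exact hdisj.mono hV₁ hV₂
  rw [← zeroLocus_mul, zeroLocus_subset_zeroLocus_iff] at hJq
  obtain ⟨n, hn⟩ := Ideal.exists_pow_le_of_le_radical_of_fg hJq (hq₁.mul hq₂)
  refine ⟨q₁ ^ (n + 1), q₂ ^ (n + 1), Ideal.isCoprime_iff_sup_eq.mp hcop.pow, ?_,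
    zeroLocus_pow q₁ n.succ_ne_zero ▸ hV₁,
    zeroLocus_pow q₂ n.succ_ne_zero ▸ hV₂⟩
  rw [← Ideal.mul_eq_inf_of_isCoprime hcop.pow, ← mul_pow]
  exact (Ideal.pow_le_pow_right n.le_succ).trans hn

end ThickSupport

section TorsionDecomposition

variable {R M : Type*} [CommRing R] [AddCommGroup M] [Module R M]

lemma Module.support_subset_zeroLocus_of_le_annihilator {I : Ideal R}
    (h : I ≤ Module.annihilator R M) : Module.support R M ⊆ zeroLocus I :=
  fun _ hp => h.trans (Module.annihilator_le_of_mem_support hp)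

lemma Submodule.support_torsionBySet_subset (I : Ideal R) :
    Module.support R (torsionBySet R M I) ⊆ zeroLocus I :=
  Module.support_subset_zeroLocus_of_le_annihilator fun a ha =>
    Module.mem_annihilator.mpr fun x =>
      Subtype.ext ((mem_torsionBySet_iff _ (x : M)).mp x.2 ⟨a, ha⟩)

lemma Submodule.isCompl_torsionBySet_of_sup_eq_top {I₁ I₂ : Ideal R} (hcop : I₁ ⊔ I₂ = ⊤)
    (hann : I₁ ⊓ I₂ ≤ Module.annihilator R M) :
    IsCompl (torsionBySet R M I₁) (torsionBySet R M I₂) := by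
  refine ⟨disjoint_torsionBySet_ideal hcop, codisjoint_iff.mpr ?_⟩
  rw [sup_torsionBySet_ideal_eq_torsionBySet_inf (hc := hcop), eq_top_iff]
  exact fun x _ => (mem_torsionBySet_iff _ x).mpr fun a => Module.mem_annihilator.mp (hann a.2) x

lemma Module.FinitePresentation.of_isCompl [Module.FinitePresentation R M]
    {p q : Submodule R M} (h : IsCompl p q) : Module.FinitePresentation R p :=
  have : Module.FinitePresentation R (p × q) :=
    .of_equiv (Submodule.prodEquivOfIsCompl p q h).symm
  Module.finitePresentation_of_split_exact (.inl R p q) (.snd R p q) (.inr R p q)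
    (LinearMap.snd_comp_inr R p q) LinearMap.inl_injective Function.Exact.inl_snd

end TorsionDecomposition

theorem wide_decomp_of_thick_support_decomp_general (R : Type u) [CommRing R]
    (A A₁ A₂ : Set (PrimeSpectrum R))
    (h₁ : IsThickSupport R A₁) (h₂ : IsThickSupport R A₂)
    (hdisj : Disjoint A₁ A₂) (hunion : A = A₁ ∪ A₂) :
    ∀ M : ModuleCat.{u} R, Module.FinitePresentation R M → Module.support R M ⊆ A →
      ∃ M₁ M₂ : ModuleCat.{u} R,
        Module.FinitePresentation R M₁ ∧ Module.FinitePresentation R M₂ ∧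
        Module.support R M₁ ⊆ A₁ ∧ Module.support R M₂ ⊆ A₂ ∧
        Nonempty (M ≃ₗ[R] M₁ × M₂) := by
  intro M hM hsupp
  rw [Module.support_eq_zeroLocus, hunion] at hsupp
  obtain ⟨I₁, I₂, hcop, hann, hI₁, hI₂⟩ :=
    h₁.exists_sup_eq_top_inf_le_of_zeroLocus_subset h₂ hdisj hsupp
  have hcompl := Submodule.isCompl_torsionBySet_of_sup_eq_top hcop hann
  exact ⟨.of R (Submodule.torsionBySet R M I₁), .of R (Submodule.torsionBySet R M I₂),
    .of_isCompl hcompl, .of_isCompl hcompl.symm,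
    (Submodule.support_torsionBySet_subset I₁).trans hI₁,
    (Submodule.support_torsionBySet_subset I₂).trans hI₂,
    ⟨(Submodule.prodEquivOfIsCompl _ _ hcompl).symm⟩⟩

/-- **Decomposition of modules along a disjoint decomposition of a thick support
(Proposition prop:1).** Let `R` be a commutative regular coherent ring and let
`A = A₁ ∪ A₂` be a thick support of `Spec R` written as the union of two disjoint thick
supports. Then every finitely presented `R`-module `M` with `Supp M ⊆ A` is isomorphic
to a direct sum `M₁ ⊕ M₂` of finitely presented modules with `Supp M₁ ⊆ A₁` and
`Supp M₂ ⊆ A₂`; that is, `W_A = W_{A₁} ⊔ W_{A₂}`. -/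
theorem wide_decomp_of_thick_support_decomp (R : Type u) [CommRing R]
    (hcoh : IsCoherentRing R) (hreg : IsRegularRing' R)
    (A A₁ A₂ : Set (PrimeSpectrum R)) (hA : IsThickSupport R A)
    (h₁ : IsThickSupport R A₁) (h₂ : IsThickSupport R A₂)
    (hdisj : Disjoint A₁ A₂) (hunion : A = A₁ ∪ A₂) :
    ∀ M : ModuleCat.{u} R, Module.FinitePresentation R M → Module.support R M ⊆ A →
      ∃ M₁ M₂ : ModuleCat.{u} R,
        Module.FinitePresentation R M₁ ∧ Module.FinitePresentation R M₂ ∧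
        Module.support R M₁ ⊆ A₁ ∧ Module.support R M₂ ⊆ A₂ ∧
        Nonempty (M ≃ₗ[R] M₁ × M₂) :=
  wide_decomp_of_thick_support_decomp_general R A A₁ A₂ h₁ h₂ hdisj hunion
end

section
/- Let R be a commutative noetherian ring and let A be a specialization closed subset of Spec(R), i.e., a union of Zariski closed subsets. Then A admits a Krull-Schmidt thick decomposition: there is a family (A_k) of pairwise disjoint, nonempty, indecomposable specialization closed subsets with A = ⋃ A_k, and any such family is unique up to permutation of the pieces. -/
open CategoryTheory Limits Opposite Pretriangulated DirectSum

universe u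

/-! Ordering primes by inclusion, the specialization closed subsets of `Spec R` are exactly
the upper sets. An upper set `A` splits into the classes of the equivalence relation on `A`
generated by comparability: each class is an upper set, and a splitting `B ∪ C` of a class
into disjoint upper sets would make `B` and `A \ B` upper, so `B` would be a union of
classes. Uniqueness holds because an indecomposable upper set meeting a piece of a partition
into disjoint upper sets lies inside that piece. -/

theorem eq_of_mem_of_pairwise_disjoint {α ι : Type*} {f : ι → Set α}
    (hf : Pairwise (Function.onFun Disjoint f)) {i j : ι} {a : α} (hi : a ∈ f i)
    (hj : a ∈ f j) : i = j := by
  by_contra hij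
  exact Set.disjoint_left.1 (hf hij) hi hj

section UpperSetDecomposition

variable {α : Type u} [Preorder α]

def IsIndecomposableUpperSet (A : Set α) : Prop :=
  IsUpperSet A ∧ A.Nonempty ∧ ∀ B C : Set α, IsUpperSet B → IsUpperSet C →
    Disjoint B C → A = B ∪ C → B = ∅ ∨ C = ∅

theorem IsIndecomposableUpperSet.subset_of_mem {κ : Type*} {U : Set α} {ℬ : κ → Set α}
    (hU : IsIndecomposableUpperSet U) (hℬ : ∀ k, IsUpperSet (ℬ k))
    (hdℬ : Pairwise (Function.onFun Disjoint ℬ)) (hUℬ : U ⊆ ⋃ k, ℬ k) {p : α} {k : κ}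
    (hpU : p ∈ U) (hpk : p ∈ ℬ k) : U ⊆ ℬ k := by
  have hdiff : IsUpperSet (U \ ℬ k) := by
    rintro q r hqr ⟨hqU, hqk⟩
    obtain ⟨j, hqj⟩ := Set.mem_iUnion.1 (hUℬ hqU)
    refine ⟨hU.1 hqr hqU, fun hrk => hqk ?_⟩
    rwa [← eq_of_mem_of_pairwise_disjoint hdℬ (hℬ j hqr hqj) hrk]
  rcases hU.2.2 _ _ (hU.1.inter (hℬ k)) hdiff Set.disjoint_sdiff_inter.symm
      (Set.inter_union_sdiff U (ℬ k)).symm with h | h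
  · exact absurd h (Set.nonempty_iff_ne_empty.1 ⟨p, hpU, hpk⟩)
  · exact Set.sdiff_eq_empty.1 h

theorem exists_equiv_of_iUnion_eq {ι κ : Type*} {𝒜 : ι → Set α} {ℬ : κ → Set α}
    (h𝒜 : ∀ i, IsIndecomposableUpperSet (𝒜 i)) (hℬ : ∀ k, IsIndecomposableUpperSet (ℬ k))
    (hd𝒜 : Pairwise (Function.onFun Disjoint 𝒜)) (hdℬ : Pairwise (Function.onFun Disjoint ℬ))
    (hU : ⋃ i, 𝒜 i = ⋃ k, ℬ k) : ∃ σ : ι ≃ κ, ∀ i, 𝒜 i = ℬ (σ i) := by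
  have eq_of_mem {p : α} {i : ι} {k : κ} (hi : p ∈ 𝒜 i) (hk : p ∈ ℬ k) : 𝒜 i = ℬ k :=
    subset_antisymm
      ((h𝒜 i).subset_of_mem (fun k => (hℬ k).1) hdℬ (hU ▸ Set.subset_iUnion 𝒜 i) hi hk)
      ((hℬ k).subset_of_mem (fun i => (h𝒜 i).1) hd𝒜 (hU ▸ Set.subset_iUnion ℬ k) hk hi)
  have matching (i : ι) : ∃ k, 𝒜 i = ℬ k := by
    obtain ⟨p, hp⟩ := (h𝒜 i).2.1
    obtain ⟨k, hk⟩ := Set.mem_iUnion.1 (hU ▸ Set.mem_iUnion_of_mem i hp)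
    exact ⟨k, eq_of_mem hp hk⟩
  choose σ hσ using matching
  refine ⟨Equiv.ofBijective σ ⟨fun i j hij => ?_, fun k => ?_⟩, hσ⟩
  · obtain ⟨p, hp⟩ := (h𝒜 i).2.1
    exact eq_of_mem_of_pairwise_disjoint hd𝒜 hp (by rwa [hσ j, ← hij, ← hσ i])
  · obtain ⟨p, hp⟩ := (hℬ k).2.1
    obtain ⟨i, hi⟩ := Set.mem_iUnion.1 (hU.symm ▸ Set.mem_iUnion_of_mem k hp)
    exact ⟨i, eq_of_mem_of_pairwise_disjoint hdℬ (hσ i ▸ hi) hp⟩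

def comparabilitySetoid (A : Set α) : Setoid A :=
  Relation.EqvGen.setoid (Relation.SymmGen (· ≤ ·))

def comparabilityComponent (A : Set α) (c : Quotient (comparabilitySetoid A)) : Set α :=
  {p | ∃ h : p ∈ A, ⟦⟨p, h⟩⟧ = c}

theorem comparabilitySetoid_mk_eq_of_le {A : Set α} {x y : A} (h : x ≤ y) :
    (⟦x⟧ : Quotient (comparabilitySetoid A)) = ⟦y⟧ :=
  Quotient.sound (Relation.EqvGen.rel _ _ (.of_le h))

theorem mem_iff_of_comparabilitySetoid_mk_eq {A B : Set α} (hB : IsUpperSet B)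
    (hAB : IsUpperSet (A \ B)) {x y : A}
    (h : (⟦x⟧ : Quotient (comparabilitySetoid A)) = ⟦y⟧) : x.1 ∈ B ↔ y.1 ∈ B := by
  have mem_iff_of_le {a b : A} (hab : a ≤ b) : a.1 ∈ B ↔ b.1 ∈ B :=
    ⟨fun ha => hB hab ha, fun hb => by_contra fun ha => (hAB hab ⟨a.2, ha⟩).2 hb⟩
  have hxy : Relation.EqvGen (Relation.SymmGen (· ≤ ·)) x y := Quotient.exact h
  clear h
  induction hxy with
  | rel a b hab => exact hab.elim mem_iff_of_le fun hba => (mem_iff_of_le hba).symm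
  | refl => exact Iff.rfl
  | symm _ _ _ ih => exact ih.symm
  | trans _ _ _ _ _ ih₁ ih₂ => exact ih₁.trans ih₂

theorem mem_comparabilityComponent_mk {A : Set α} (x : A) :
    x.1 ∈ comparabilityComponent A ⟦x⟧ :=
  ⟨x.2, rfl⟩

theorem comparabilitySetoid_mk_eq_of_mem {A : Set α} {c : Quotient (comparabilitySetoid A)}
    {p : α} (hp : p ∈ comparabilityComponent A c) (hpA : p ∈ A) : ⟦⟨p, hpA⟩⟧ = c := by
  obtain ⟨_, rfl⟩ := hp
  rfl

theorem comparabilityComponent_nonempty {A : Set α} (c : Quotient (comparabilitySetoid A)) :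
    (comparabilityComponent A c).Nonempty :=
  Quotient.inductionOn c fun x => ⟨x.1, mem_comparabilityComponent_mk x⟩

theorem iUnion_comparabilityComponent (A : Set α) : ⋃ c, comparabilityComponent A c = A :=
  Set.Subset.antisymm (Set.iUnion_subset fun _ _ hp => hp.1)
    fun p hp => Set.mem_iUnion_of_mem _ (mem_comparabilityComponent_mk ⟨p, hp⟩)

theorem pairwise_disjoint_comparabilityComponent (A : Set α) :
    Pairwise (Function.onFun Disjoint (comparabilityComponent A)) := fun _ _ hcd =>
  Set.disjoint_left.2 fun _ ⟨_, hc⟩ ⟨_, hd⟩ => hcd (hc.symm.trans hd)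

theorem isUpperSet_comparabilityComponent {A : Set α} (hA : IsUpperSet A)
    (c : Quotient (comparabilitySetoid A)) : IsUpperSet (comparabilityComponent A c) := by
  rintro p q hpq ⟨hp, rfl⟩
  have hq : q ∈ A := hA hpq hp
  exact ⟨hq, (comparabilitySetoid_mk_eq_of_le (show ⟨p, hp⟩ ≤ ⟨q, hq⟩ from hpq)).symm⟩

theorem isUpperSet_diff_comparabilityComponent {A : Set α} (hA : IsUpperSet A)
    (c : Quotient (comparabilitySetoid A)) : IsUpperSet (A \ comparabilityComponent A c) := by
  rintro p q hpq ⟨hp, hpc⟩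
  refine ⟨hA hpq hp, fun ⟨hq, hqc⟩ => hpc ⟨hp, ?_⟩⟩
  exact (comparabilitySetoid_mk_eq_of_le (show ⟨p, hp⟩ ≤ ⟨q, hq⟩ from hpq)).trans hqc

theorem IsUpperSet.isIndecomposableUpperSet_comparabilityComponent {A : Set α}
    (hA : IsUpperSet A) (c : Quotient (comparabilitySetoid A)) :
    IsIndecomposableUpperSet (comparabilityComponent A c) := by
  refine ⟨isUpperSet_comparabilityComponent hA c, comparabilityComponent_nonempty c,
    fun B C hB hC hBC hP => ?_⟩
  rw [or_iff_not_imp_left, ← Ne, ← Set.nonempty_iff_ne_empty, ← Set.not_nonempty_iff_eq_empty]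
  rintro ⟨p, hpB⟩ ⟨q, hqC⟩
  have hAB : IsUpperSet (A \ B) := by
    have hBCA : B ∪ C ⊆ A := hP ▸ fun _ h => h.1
    have hsplit : A \ B = (A \ comparabilityComponent A c) ∪ C := by
      rw [hP]
      ext x
      have hxBC : x ∈ B → x ∉ C := fun hx => Set.disjoint_left.1 hBC hx
      have hxA : x ∈ B ∪ C → x ∈ A := fun hx => hBCA hx
      simp only [Set.mem_sdiff, Set.mem_union] at hxA ⊢
      tauto
    exact hsplit ▸ (isUpperSet_diff_comparabilityComponent hA c).union hC
  have hp : p ∈ comparabilityComponent A c := hP ▸ Or.inl hpB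
  have hq : q ∈ comparabilityComponent A c := hP ▸ Or.inr hqC
  have hqB := (mem_iff_of_comparabilitySetoid_mk_eq hB hAB
    ((comparabilitySetoid_mk_eq_of_mem hp hp.1).trans
      (comparabilitySetoid_mk_eq_of_mem hq hq.1).symm)).1 hpB
  exact Set.disjoint_left.1 hBC hqB hqC

end UpperSetDecomposition

section PrimeSpectrum

variable {R : Type u} [CommRing R]

theorem isSpclClosed_iff_isUpperSet (A : Set (PrimeSpectrum R)) :
    IsSpclClosed R A ↔ IsUpperSet A := by
  constructor
  · rintro ⟨𝒮, rfl⟩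
    exact isUpperSet_iUnion₂ fun I _ p q hpq hp =>
      (PrimeSpectrum.isClosed_zeroLocus _).stableUnderSpecialization
        ((PrimeSpectrum.le_iff_specializes p q).1 hpq) hp
  · intro hA
    refine ⟨PrimeSpectrum.asIdeal '' A, Set.Subset.antisymm (fun q hq => ?_) ?_⟩
    · exact Set.mem_biUnion (Set.mem_image_of_mem _ hq)
        ((PrimeSpectrum.mem_zeroLocus _ _).2 le_rfl)
    · refine Set.iUnion₂_subset ?_
      rintro _ ⟨p, hp, rfl⟩ q hpq
      exact hA ((PrimeSpectrum.asIdeal_le_asIdeal p q).1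
        ((PrimeSpectrum.mem_zeroLocus _ _).1 hpq)) hp

theorem isIndecompSpclClosed_iff_isIndecomposableUpperSet (A : Set (PrimeSpectrum R)) :
    IsIndecompSpclClosed R A ↔ IsIndecomposableUpperSet A := by
  simp only [IsIndecompSpclClosed, IsIndecomposableUpperSet, isSpclClosed_iff_isUpperSet]

end PrimeSpectrum

theorem spclClosed_KS_decomp_general (R : Type u) [CommRing R]
    (A : Set (PrimeSpectrum R)) (hA : IsSpclClosed R A) :
    ∃ (ι : Type u) (𝒜 : ι → Set (PrimeSpectrum R)),
      (∀ i, IsIndecompSpclClosed R (𝒜 i)) ∧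
      Pairwise (Function.onFun Disjoint 𝒜) ∧
      (⋃ i, 𝒜 i) = A ∧
      ∀ (κ : Type u) (ℬ : κ → Set (PrimeSpectrum R)),
        (∀ k, IsIndecompSpclClosed R (ℬ k)) → Pairwise (Function.onFun Disjoint ℬ) →
        (⋃ k, ℬ k) = A → ∃ σ : ι ≃ κ, ∀ i, 𝒜 i = ℬ (σ i) := by
  rw [isSpclClosed_iff_isUpperSet] at hA
  simp only [isIndecompSpclClosed_iff_isIndecomposableUpperSet]
  refine ⟨_, comparabilityComponent A, hA.isIndecomposableUpperSet_comparabilityComponent,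
    pairwise_disjoint_comparabilityComponent A, iUnion_comparabilityComponent A,
    fun κ ℬ hℬ hdℬ hU => ?_⟩
  exact exists_equiv_of_iUnion_eq hA.isIndecomposableUpperSet_comparabilityComponent hℬ
    (pairwise_disjoint_comparabilityComponent A) hdℬ (hU ▸ iUnion_comparabilityComponent A)

/-- **Krull-Schmidt decomposition of specialization closed subsets (Proposition
prop:graph).** Let `R` be a commutative noetherian ring and `A` a specialization closed
subset of `Spec R` (a union of Zariski closed subsets). Then `A` admits a Krull-Schmidt
thick decomposition: there is a family of pairwise disjoint, nonempty, indecomposable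
specialization closed subsets with union `A`, and any such family is unique up to
permutation of the pieces. -/
theorem spclClosed_KS_decomp (R : Type u) [CommRing R] [IsNoetherianRing R]
    (A : Set (PrimeSpectrum R)) (hA : IsSpclClosed R A) :
    ∃ (ι : Type u) (𝒜 : ι → Set (PrimeSpectrum R)),
      (∀ i, IsIndecompSpclClosed R (𝒜 i)) ∧
      Pairwise (Function.onFun Disjoint 𝒜) ∧
      (⋃ i, 𝒜 i) = A ∧
      ∀ (κ : Type u) (ℬ : κ → Set (PrimeSpectrum R)),
        (∀ k, IsIndecompSpclClosed R (ℬ k)) → Pairwise (Function.onFun Disjoint ℬ) →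
        (⋃ k, ℬ k) = A → ∃ σ : ι ≃ κ, ∀ i, 𝒜 i = ℬ (σ i) :=
  spclClosed_KS_decomp_general R A hA
end

section
/- Let R be a commutative noetherian ring and M a finitely generated R-module. Then M admits a splitting M ≅ ⊕_{i=1}^n M_i for some n, where the supports Supp(M_i) are pairwise disjoint and each Supp(M_i) is indecomposable (nonempty and not a union of two disjoint nonempty specialization closed sets); moreover such a splitting is unique up to isomorphism and permutation of the summands. -/
open CategoryTheory Limits Opposite Pretriangulated DirectSum

universe u

/-!
The support of `M` is the closed set `V(Ann M)`. In the noetherian space `Spec R`, a closed set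
that is the disjoint union of two specialization closed sets is the disjoint union of two closed
sets, so noetherian induction cuts `Supp M` into finitely many disjoint closed indecomposable
pieces. Disjoint closed sets `V(J₁)`, `V(J₂)` covering `V(Ann M)` yield `a ∈ J₁`, `b ∈ J₂` with
`a + b = 1` and `a * b ∈ Ann M`, hence `M = b • M ⊕ a • M` with supports `V(J₁)` and `V(J₂)`;
repeating this realises the partition of `Supp M` as a direct sum decomposition of `M`.
Uniqueness: a partition into indecomposable specialization closed sets is unique, and there are
no nonzero maps between modules with disjoint supports, so an isomorphism between two such
direct sums is diagonal.
-/

open Function DirectSum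

open TopologicalSpace in
theorem StableUnderSpecialization.isClosed_of_disjoint_union {X : Type*} [TopologicalSpace X]
    [NoetherianSpace X] [QuasiSober X] {A B₁ B₂ : Set X} (hA : IsClosed A)
    (h₁ : StableUnderSpecialization B₁) (h₂ : StableUnderSpecialization B₂)
    (hd : Disjoint B₁ B₂) (hAB : A = B₁ ∪ B₂) : IsClosed B₁ := by
  obtain ⟨S, hSf, hSc, hSi, rfl⟩ := NoetherianSpace.exists_finite_set_isClosed_irreducible hA
  -- each irreducible component lies in `B₁` or in `B₂`, according to where its generic point lies
  have hdich : ∀ Z ∈ S, Z ⊆ B₁ ∨ Z ⊆ B₂ := by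
    intro Z hZ
    have hη := (hSi Z hZ).isGenericPoint_genericPoint (hSc Z hZ)
    have hmem : _ ∈ B₁ ∪ B₂ := hAB ▸ Set.mem_sUnion_of_mem hη.mem hZ
    rcases hmem with h | h
    · exact .inl fun y hy => h₁ (hη.specializes hy) h
    · exact .inr fun y hy => h₂ (hη.specializes hy) h
  have hB₁ : B₁ = ⋃ Z ∈ {Z ∈ S | Z ⊆ B₁}, Z := by
    refine subset_antisymm (fun x hx => ?_) (Set.iUnion₂_subset fun Z hZ => hZ.2)
    obtain ⟨Z, hZ, hxZ⟩ := Set.mem_sUnion.mp (hAB ▸ Set.mem_union_left B₂ hx)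
    refine Set.mem_biUnion ⟨hZ, ?_⟩ hxZ
    exact (hdich Z hZ).resolve_right fun h => Set.disjoint_left.mp hd hx (h hxZ)
  rw [hB₁]
  exact (hSf.subset (Set.sep_subset _ _)).isClosed_biUnion fun Z hZ => hSc Z hZ.1

variable {R : Type u} [CommRing R]

theorem isSpclClosed_iff_stableUnderSpecialization {A : Set (PrimeSpectrum R)} :
    IsSpclClosed R A ↔ StableUnderSpecialization A := by
  constructor
  · rintro ⟨𝒮, rfl⟩
    exact stableUnderSpecialization_iUnion _ fun I => stableUnderSpecialization_iUnion _ fun _ =>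
      (PrimeSpectrum.isClosed_zeroLocus _).stableUnderSpecialization
  · intro hA
    refine ⟨{I | PrimeSpectrum.zeroLocus I ⊆ A}, subset_antisymm (fun x hx => ?_) ?_⟩
    · refine Set.mem_iUnion₂.mpr ⟨x.asIdeal, fun y hy => hA ?_ hx, ?_⟩
      · exact (PrimeSpectrum.le_iff_specializes x y).mp ((PrimeSpectrum.mem_zeroLocus _ _).mp hy)
      · exact (PrimeSpectrum.mem_zeroLocus _ _).mpr le_rfl
    · exact Set.iUnion₂_subset fun I hI => hI

theorem IsIndecompSpclClosed.subset_of_inter_nonempty {A : Set (PrimeSpectrum R)}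
    (hA : IsIndecompSpclClosed R A) {κ : Type*} {ℬ : κ → Set (PrimeSpectrum R)}
    (hℬ : ∀ k, StableUnderSpecialization (ℬ k)) (hd : Pairwise (Disjoint on ℬ))
    (hsub : A ⊆ ⋃ k, ℬ k) {k : κ} (hne : (A ∩ ℬ k).Nonempty) : A ⊆ ℬ k := by
  simp only [IsIndecompSpclClosed, isSpclClosed_iff_stableUnderSpecialization] at hA
  obtain ⟨hA, -, hind⟩ := hA
  have hdiff : StableUnderSpecialization (A \ ℬ k) := by
    rintro x y hxy ⟨hxA, hxk⟩
    obtain ⟨k', hxk'⟩ := Set.mem_iUnion.mp (hsub hxA)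
    have hk' : k' ≠ k := fun h => hxk (h ▸ hxk')
    exact ⟨hA hxy hxA, Set.disjoint_left.mp (hd hk') (hℬ k' hxy hxk')⟩
  have hinter : StableUnderSpecialization (A ∩ ℬ k) := fun x y hxy hx =>
    ⟨hA hxy hx.1, hℬ k hxy hx.2⟩
  rcases hind _ _ hinter hdiff Set.disjoint_sdiff_inter.symm
    (Set.inter_union_sdiff A (ℬ k)).symm with h | h
  · exact absurd h hne.ne_empty
  · exact Set.sdiff_eq_empty.mp h

theorem injective_of_isIndecompSpclClosed {ι : Type*} {𝒜 : ι → Set (PrimeSpectrum R)}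
    (h𝒜 : ∀ i, IsIndecompSpclClosed R (𝒜 i)) (hd : Pairwise (Disjoint on 𝒜)) :
    Function.Injective 𝒜 :=
  pairwise_ne_iff_injective.mp fun i _ hij => (hd hij).ne (h𝒜 i).2.1.ne_empty

theorem exists_equiv_of_iUnion_eq_of_isIndecompSpclClosed {ι κ : Type*}
    {𝒜 : ι → Set (PrimeSpectrum R)} {ℬ : κ → Set (PrimeSpectrum R)}
    (h𝒜 : ∀ i, IsIndecompSpclClosed R (𝒜 i)) (hℬ : ∀ k, IsIndecompSpclClosed R (ℬ k))
    (hd𝒜 : Pairwise (Disjoint on 𝒜)) (hdℬ : Pairwise (Disjoint on ℬ))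
    (hunion : ⋃ i, 𝒜 i = ⋃ k, ℬ k) : ∃ σ : ι ≃ κ, ∀ i, 𝒜 i = ℬ (σ i) := by
  have hs𝒜 i := isSpclClosed_iff_stableUnderSpecialization.mp (h𝒜 i).1
  have hsℬ k := isSpclClosed_iff_stableUnderSpecialization.mp (hℬ k).1
  have heq : ∀ i k, (𝒜 i ∩ ℬ k).Nonempty → 𝒜 i = ℬ k := fun i k hne =>
    subset_antisymm ((h𝒜 i).subset_of_inter_nonempty hsℬ hdℬ (hunion ▸ Set.subset_iUnion 𝒜 i) hne)
      ((hℬ k).subset_of_inter_nonempty hs𝒜 hd𝒜 (hunion ▸ Set.subset_iUnion ℬ k)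
        (Set.inter_comm _ _ ▸ hne))
  have hmeet : ∀ i, ∃ k, (𝒜 i ∩ ℬ k).Nonempty := fun i => by
    obtain ⟨x, hx⟩ := (h𝒜 i).2.1
    obtain ⟨k, hk⟩ := Set.mem_iUnion.mp (hunion ▸ Set.mem_iUnion_of_mem i hx)
    exact ⟨k, x, hx, hk⟩
  choose σ hσ using hmeet
  refine ⟨Equiv.ofBijective σ ⟨fun i j hij => ?_, fun k => ?_⟩, fun i => heq i _ (hσ i)⟩
  · exact injective_of_isIndecompSpclClosed h𝒜 hd𝒜 <| by rw [heq i _ (hσ i), heq j _ (hσ j), hij]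
  · obtain ⟨x, hx⟩ := (hℬ k).2.1
    obtain ⟨i, hi⟩ := Set.mem_iUnion.mp (hunion.symm ▸ Set.mem_iUnion_of_mem k hx)
    refine ⟨i, injective_of_isIndecompSpclClosed hℬ hdℬ ?_⟩
    rw [← heq i _ (hσ i), heq i k ⟨x, hi, hx⟩]

open TopologicalSpace in
theorem exists_finite_partition_isIndecompSpclClosed [IsNoetherianRing R]
    {A : Set (PrimeSpectrum R)} (hA : IsClosed A) :
    ∃ 𝒞 : Set (Set (PrimeSpectrum R)), 𝒞.Finite ∧ 𝒞.PairwiseDisjoint id ∧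
      (∀ B ∈ 𝒞, IsClosed B ∧ IsIndecompSpclClosed R B) ∧ ⋃₀ 𝒞 = A := by
  lift A to Closeds (PrimeSpectrum R) using hA
  induction A using WellFoundedLT.induction with | ind A ih => ?_
  by_cases hind : IsIndecompSpclClosed R A
  · exact ⟨{(A : Set _)}, Set.finite_singleton _, Set.pairwiseDisjoint_singleton _ _,
      by simpa using ⟨A.isClosed, hind⟩, Set.sUnion_singleton _⟩
  rcases (A : Set (PrimeSpectrum R)).eq_empty_or_nonempty with hempty | hne
  · exact ⟨∅, Set.finite_empty, Set.pairwiseDisjoint_empty, by simp, by simp [hempty]⟩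
  simp only [IsIndecompSpclClosed, isSpclClosed_iff_stableUnderSpecialization,
    A.isClosed.stableUnderSpecialization, hne, true_and, not_forall] at hind
  obtain ⟨B₁, B₂, h₁, h₂, hd, hAB, hB⟩ := hind
  obtain ⟨hne₁, hne₂⟩ : B₁.Nonempty ∧ B₂.Nonempty := by
    simpa [not_or, ← Set.nonempty_iff_ne_empty] using hB
  have hc₁ := h₁.isClosed_of_disjoint_union A.isClosed h₂ hd hAB
  have hc₂ := h₂.isClosed_of_disjoint_union A.isClosed h₁ hd.symm (hAB.trans (Set.union_comm _ _))
  have hlt₁ : (⟨B₁, hc₁⟩ : Closeds _) < A := SetLike.lt_iff_le_and_exists.mpr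
    ⟨fun x hx => hAB.symm.subset (Or.inl hx), hne₂.some,
      hAB.symm.subset (Or.inr hne₂.some_mem),
      Set.disjoint_right.mp hd hne₂.some_mem⟩
  have hlt₂ : (⟨B₂, hc₂⟩ : Closeds _) < A := SetLike.lt_iff_le_and_exists.mpr
    ⟨fun x hx => hAB.symm.subset (Or.inr hx), hne₁.some,
      hAB.symm.subset (Or.inl hne₁.some_mem),
      Set.disjoint_left.mp hd hne₁.some_mem⟩
  obtain ⟨𝒞₁, hf₁, hpd₁, hP₁, hU₁⟩ := ih _ hlt₁
  obtain ⟨𝒞₂, hf₂, hpd₂, hP₂, hU₂⟩ := ih _ hlt₂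
  refine ⟨𝒞₁ ∪ 𝒞₂, hf₁.union hf₂, hpd₁.union hpd₂ fun C₁ hC₁ C₂ hC₂ _ => ?_,
    fun C hC => hC.elim (hP₁ C) (hP₂ C), by rw [Set.sUnion_union, hU₁, hU₂, hAB]; rfl⟩
  exact hd.mono ((Set.subset_sUnion_of_mem hC₁).trans hU₁.subset)
    ((Set.subset_sUnion_of_mem hC₂).trans hU₂.subset)

theorem Module.support_prod (M N : Type*) [AddCommGroup M] [Module R M] [AddCommGroup N]
    [Module R N] : Module.support R (M × N) = Module.support R M ∪ Module.support R N :=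
  Module.support_of_exact Function.Exact.inl_snd LinearMap.inl_injective
    LinearMap.snd_surjective

theorem Module.support_directSum {ι : Type*} [Fintype ι] [DecidableEq ι] (N : ι → Type*)
    [∀ i, AddCommGroup (N i)] [∀ i, Module R (N i)] :
    Module.support R (⨁ i, N i) = ⋃ i, Module.support R (N i) := by
  refine subset_antisymm (fun p hp => ?_) (Set.iUnion_subset fun i =>
    Module.support_subset_of_injective (lof R ι N i) (DirectSum.of_injective (β := N) i))
  by_contra hp'
  simp only [Set.mem_iUnion, not_exists, Module.notMem_support_iff'] at hp'
  obtain ⟨x, hx⟩ := Module.mem_support_iff'.mp hp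
  choose r hr hrx using fun i => hp' i (x i)
  refine hx (∏ i, r i) (Submonoid.prod_mem p.asIdeal.primeCompl fun i _ => hr i) ?_
  refine DFinsupp.ext fun i => ?_
  rw [DFinsupp.smul_apply, ← Finset.mul_prod_erase Finset.univ r (Finset.mem_univ i), mul_comm,
    mul_smul, hrx i, smul_zero, DFinsupp.zero_apply]

theorem LinearMap.eq_zero_of_disjoint_support {M N : Type*} [AddCommGroup M] [Module R M]
    [AddCommGroup N] [Module R N] (f : M →ₗ[R] N)
    (h : Disjoint (Module.support R M) (Module.support R N)) : f = 0 := by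
  have : Subsingleton (LinearMap.range f) := Module.support_eq_empty_iff.mp <|
    Set.subset_empty_iff.mp fun p hp => h.le_bot
      ⟨Module.support_subset_of_surjective _ f.surjective_rangeRestrict hp,
        Module.support_subset_of_injective _ (Submodule.injective_subtype _) hp⟩
  ext x
  exact congrArg Subtype.val (Subsingleton.elim (f.rangeRestrict x) 0)

theorem DirectSum.eq_lof_of_component_eq_zero {ι : Type*} [DecidableEq ι] {N : ι → Type*}
    [∀ i, AddCommGroup (N i)] [∀ i, Module R (N i)] {x : ⨁ i, N i} {i : ι}
    (hx : ∀ j, j ≠ i → component R ι N j x = 0) : x = lof R ι N i (component R ι N i x) := by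
  refine DirectSum.ext_component R fun j => ?_
  by_cases hj : j = i
  · subst hj
    rw [component.lof_self]
  · rw [hx j hj, component.of, dif_neg (Ne.symm hj)]

noncomputable def DirectSum.componentLEquivOfDisjointSupport {ι κ : Type*} [DecidableEq ι]
    [DecidableEq κ] {N : ι → Type*} {P : κ → Type*} [∀ i, AddCommGroup (N i)]
    [∀ i, Module R (N i)] [∀ k, AddCommGroup (P k)] [∀ k, Module R (P k)]
    (e : (⨁ i, N i) ≃ₗ[R] ⨁ k, P k) (σ : ι ≃ κ)
    (h : ∀ i k, k ≠ σ i → Disjoint (Module.support R (N i)) (Module.support R (P k))) (i : ι) :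
    N i ≃ₗ[R] P (σ i) :=
  have he : ∀ x, e (lof R ι N i x) = lof R κ P (σ i) (component R κ P (σ i) (e (lof R ι N i x))) :=
    fun x => eq_lof_of_component_eq_zero fun k hk => LinearMap.congr_fun
      ((component R κ P k ∘ₗ e.toLinearMap ∘ₗ lof R ι N i).eq_zero_of_disjoint_support (h i k hk)) x
  have he' : ∀ y, e.symm (lof R κ P (σ i) y) =
      lof R ι N i (component R ι N i (e.symm (lof R κ P (σ i) y))) :=
    fun y => eq_lof_of_component_eq_zero fun j hj => LinearMap.congr_fun
      ((component R ι N j ∘ₗ e.symm.toLinearMap ∘ₗ lof R κ P (σ i)).eq_zero_of_disjoint_support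
        (h j (σ i) (σ.injective.ne hj).symm).symm) y
  LinearEquiv.ofLinearMap (component R κ P (σ i) ∘ₗ e.toLinearMap ∘ₗ lof R ι N i)
    (component R ι N i ∘ₗ e.symm.toLinearMap ∘ₗ lof R κ P (σ i))
    (LinearMap.ext fun y => by simp [← he', component.lof_self])
    (LinearMap.ext fun x => by simp [← he, component.lof_self])

theorem Ideal.exists_add_eq_one_mul_mem [IsNoetherianRing R] {I J₁ J₂ : Ideal R}
    (hcop : J₁ ⊔ J₂ = ⊤) (hmul : J₁ * J₂ ≤ I.radical) :
    ∃ a ∈ J₁, ∃ b ∈ J₂, a + b = 1 ∧ a * b ∈ I := by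
  obtain ⟨k, hk⟩ := Ideal.exists_pow_le_of_le_radical_of_fg hmul (IsNoetherian.noetherian _)
  have hone : (1 : R) ∈ J₁ ^ (k + 1) ⊔ J₂ ^ (k + 1) := by
    rw [Ideal.pow_sup_pow_eq_top hcop]
    exact Submodule.mem_top
  obtain ⟨a, ha, b, hb, hab⟩ := Submodule.mem_sup.mp hone
  refine ⟨a, Ideal.pow_le_self k.succ_ne_zero ha, b, Ideal.pow_le_self k.succ_ne_zero hb, hab, ?_⟩
  have hprod : a * b ∈ (J₁ * J₂) ^ (k + 1) := mul_pow J₁ J₂ (k + 1) ▸ Ideal.mul_mem_mul ha hb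
  exact hk (Ideal.pow_le_pow_right k.le_succ hprod)

section Splitting

variable {M : Type*} [AddCommGroup M] [Module R M] {a b : R}

theorem Submodule.isCompl_range_lsmul (hab : a + b = 1)
    (hann : a * b ∈ Module.annihilator R M) :
    IsCompl (LinearMap.range (LinearMap.lsmul R M a))
      (LinearMap.range (LinearMap.lsmul R M b)) := by
  have hann' (m : M) : (a * b) • m = 0 := Module.mem_annihilator.mp hann m
  refine ⟨Submodule.disjoint_def.mpr ?_, Submodule.codisjoint_iff_exists_add_eq.mpr ?_⟩
  · rintro _ ⟨m, rfl⟩ ⟨m', hm'⟩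
    simp only [LinearMap.lsmul_apply] at hm' ⊢
    calc a • m = (a + b) • a • m := by rw [hab, one_smul]
      _ = a • b • m' + b • a • m := by rw [add_smul, ← hm']
      _ = 0 := by rw [smul_smul, smul_smul, mul_comm b, hann', hann', add_zero]
  · exact fun m => ⟨a • m, b • m, ⟨m, rfl⟩, ⟨m, rfl⟩, by rw [← add_smul, hab, one_smul]⟩

theorem Module.support_range_lsmul_subset (hab : a + b = 1)
    (hann : a * b ∈ Module.annihilator R M) :
    Module.support R (LinearMap.range (LinearMap.lsmul R M a)) ⊆
      Module.support R M ∩ {p | a ∉ p.asIdeal} := by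
  intro p hp
  refine ⟨Module.support_subset_of_injective _ (Submodule.injective_subtype _) hp, fun ha => ?_⟩
  have hb : b ∈ Module.annihilator R (LinearMap.range (LinearMap.lsmul R M a)) := by
    refine Module.mem_annihilator.mpr ?_
    rintro ⟨_, m, rfl⟩
    refine Subtype.ext ?_
    change b • a • m = 0
    rw [smul_smul, mul_comm]
    exact Module.mem_annihilator.mp hann m
  have hone : (1 : R) ∈ p.asIdeal := hab ▸ add_mem ha (Module.annihilator_le_of_mem_support hp hb)
  exact p.isPrime.ne_top ((Ideal.eq_top_iff_one _).mpr hone)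

open PrimeSpectrum in
theorem exists_prod_equiv_support_eq [IsNoetherianRing R] [Module.Finite R M]
    {B₁ B₂ : Set (PrimeSpectrum R)} (h₁ : IsClosed B₁) (h₂ : IsClosed B₂) (hd : Disjoint B₁ B₂)
    (hM : Module.support R M = B₁ ∪ B₂) :
    ∃ M₁ M₂ : Submodule R M, Nonempty (M ≃ₗ[R] M₁ × M₂) ∧
      Module.support R M₁ = B₁ ∧ Module.support R M₂ = B₂ := by
  obtain ⟨J₁, rfl⟩ := (isClosed_iff_zeroLocus_ideal B₁).mp h₁
  obtain ⟨J₂, rfl⟩ := (isClosed_iff_zeroLocus_ideal B₂).mp h₂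
  have hcop : J₁ ⊔ J₂ = ⊤ := zeroLocus_empty_iff_eq_top.mp (by rw [zeroLocus_sup]; exact hd.eq_bot)
  have hmul : J₁ * J₂ ≤ (Module.annihilator R M).radical := by
    rw [← zeroLocus_subset_zeroLocus_iff, zeroLocus_mul, ← hM, Module.support_eq_zeroLocus]
  -- `b • M` lives over `V(J₁)` and `a • M` over `V(J₂)`
  obtain ⟨a, ha, b, hb, hab, habI⟩ := Ideal.exists_add_eq_one_mul_mem hcop hmul
  have hba : b + a = 1 := add_comm b a ▸ hab
  have hbaI : b * a ∈ Module.annihilator R M := mul_comm a b ▸ habI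
  have hsub₁ : Module.support R (LinearMap.range (LinearMap.lsmul R M b)) ⊆ zeroLocus J₁ :=
    fun p hp => by
      obtain ⟨hpM, hbp⟩ := Module.support_range_lsmul_subset hba hbaI hp
      exact (hM ▸ hpM).resolve_right fun h => hbp (h hb)
  have hsub₂ : Module.support R (LinearMap.range (LinearMap.lsmul R M a)) ⊆ zeroLocus J₂ :=
    fun p hp => by
      obtain ⟨hpM, hap⟩ := Module.support_range_lsmul_subset hab habI hp
      exact (hM ▸ hpM).resolve_left fun h => hap (h ha)
  let e := (Submodule.prodEquivOfIsCompl _ _ (Submodule.isCompl_range_lsmul hba hbaI)).symm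
  have hunion := (Module.support_prod _ _).symm.trans (e.support_eq.symm.trans hM)
  refine ⟨_, _, ⟨e⟩, subset_antisymm hsub₁ fun p hp => ?_, subset_antisymm hsub₂ fun p hp => ?_⟩
  · exact (hunion.symm.subset (Or.inl hp)).resolve_right
      fun h => Set.disjoint_left.mp hd hp (hsub₂ h)
  · exact (hunion.symm.subset (Or.inr hp)).resolve_left
      fun h => Set.disjoint_left.mp hd (hsub₁ h) hp

end Splitting

theorem exists_directSum_equiv_support_eq [IsNoetherianRing R] (ι : Type*) [Finite ι]
    (M : Type u) [AddCommGroup M] [Module R M] [Module.Finite R M]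
    (A : ι → Set (PrimeSpectrum R)) (hA : ∀ i, IsClosed (A i)) (hd : Pairwise (Disjoint on A))
    (hM : Module.support R M = ⋃ i, A i) :
    ∃ N : ι → ModuleCat.{u} R, Nonempty (M ≃ₗ[R] ⨁ i, N i) ∧
      ∀ i, Module.support R (N i) = A i := by
  induction ι using Finite.induction_empty_option generalizing M with
  | of_equiv e ih =>
    obtain ⟨N, ⟨f⟩, hN⟩ := ih M (A ∘ e) (fun i => hA (e i))
      (fun i j hij => hd (e.injective.ne hij)) (hM.trans (e.surjective.iUnion_comp A).symm)
    refine ⟨fun k => N (e.symm k), ⟨f.trans (lequivCongrLeft R e)⟩, fun k => ?_⟩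
    rw [hN, Function.comp_apply, e.apply_symm_apply]
  | h_empty =>
    have : Subsingleton M := Module.support_eq_empty_iff.mp (hM.trans (Set.iUnion_of_empty A))
    exact ⟨fun i => i.elim, ⟨LinearEquiv.ofSubsingleton _ _⟩, fun i => i.elim⟩
  | @h_option α _ ih =>
    obtain ⟨M₁, M₂, ⟨e⟩, h₁, h₂⟩ := exists_prod_equiv_support_eq (hA none)
      (isClosed_iUnion_of_finite fun i => hA (some i))
      (Set.disjoint_iUnion_right.mpr fun i => hd (Option.some_ne_none i).symm)
      (hM.trans (Set.iUnion_option A))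
    obtain ⟨N, ⟨f⟩, hN⟩ := ih M₂ (fun i => A (some i)) (fun i => hA _)
      (fun i j hij => hd ((Option.some_injective _).ne hij)) h₂
    refine ⟨fun o => o.elim (ModuleCat.of R M₁) N,
      ⟨e.trans (((LinearEquiv.refl R M₁).prodCongr f).trans (lequivProdDirectSum R
        (α := fun o => (o.elim (ModuleCat.of R M₁) N : ModuleCat.{u} R))).symm)⟩, ?_⟩
    rintro (_ | i)
    exacts [h₁, hN i]

theorem exists_fin_directSum_equiv_isIndecompSpclClosed [IsNoetherianRing R] (M : Type u)
    [AddCommGroup M] [Module R M] [Module.Finite R M] :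
    ∃ (n : ℕ) (N : Fin n → ModuleCat.{u} R), Nonempty (M ≃ₗ[R] ⨁ i, N i) ∧
      Pairwise (Disjoint on fun i => Module.support R (N i)) ∧
      ∀ i, IsIndecompSpclClosed R (Module.support R (N i)) := by
  obtain ⟨𝒞, hfin, hpd, h𝒞, hU⟩ :=
    exists_finite_partition_isIndecompSpclClosed (Module.isClosed_support (R := R) (M := M))
  have : Finite 𝒞 := hfin.to_subtype
  obtain ⟨N, ⟨f⟩, hN⟩ := exists_directSum_equiv_support_eq 𝒞 M Subtype.val
    (fun B => (h𝒞 B B.2).1) (fun B C hBC => hpd B.2 C.2 (Subtype.coe_injective.ne hBC))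
    (by rw [← hU, Set.sUnion_eq_iUnion])
  let σ := Finite.equivFin 𝒞
  refine ⟨Nat.card 𝒞, fun i => N (σ.symm i), ⟨f.trans (lequivCongrLeft R σ)⟩,
    fun i j hij => ?_, fun i => ?_⟩
  · rw [Function.onFun, hN, hN]
    exact hpd (σ.symm i).2 (σ.symm j).2 (Subtype.coe_injective.ne (σ.symm.injective.ne hij))
  · rw [hN]
    exact (h𝒞 _ (σ.symm i).2).2

/-- **Splitting of a finitely generated module into pieces with disjoint indecomposable
supports (Lemma cor:splittingformodules).** Let `R` be a commutative noetherian ring and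
`M` a finitely generated `R`-module. Then `M ≅ ⊕_{i=1}^n Mᵢ` for some `n`, where the
supports of the `Mᵢ` are pairwise disjoint and indecomposable; moreover such a splitting
is unique up to isomorphism and permutation of the summands. -/
theorem fg_module_splitting_disjoint_indecomp_supports (R : Type u) [CommRing R]
    [IsNoetherianRing R] (M : Type u) [AddCommGroup M] [Module R M]
    (hM : Module.Finite R M) :
    ∃ (n : ℕ) (N : Fin n → ModuleCat.{u} R),
      Nonempty (M ≃ₗ[R] ⨁ i, N i) ∧
      (∀ i j, i ≠ j → Disjoint (Module.support R (N i)) (Module.support R (N j))) ∧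
      (∀ i, IsIndecompSpclClosed R (Module.support R (N i))) ∧
      ∀ (m : ℕ) (P : Fin m → ModuleCat.{u} R),
        Nonempty (M ≃ₗ[R] ⨁ j, P j) →
        (∀ i j, i ≠ j → Disjoint (Module.support R (P i)) (Module.support R (P j))) →
        (∀ j, IsIndecompSpclClosed R (Module.support R (P j))) →
        ∃ σ : Fin n ≃ Fin m, ∀ i, Nonempty (N i ≃ₗ[R] P (σ i)) := by
  obtain ⟨n, N, ⟨e⟩, hNd, hNi⟩ := exists_fin_directSum_equiv_isIndecompSpclClosed (R := R) M
  refine ⟨n, N, ⟨e⟩, fun _ _ hij => hNd hij, hNi, fun m P ⟨f⟩ hPd hPi => ?_⟩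
  obtain ⟨σ, hσ⟩ := exists_equiv_of_iUnion_eq_of_isIndecompSpclClosed hNi hPi hNd hPd <| by
    rw [← Module.support_directSum, ← Module.support_directSum, ← e.support_eq, f.support_eq]
  refine ⟨σ, fun i => ⟨componentLEquivOfDisjointSupport (e.symm.trans f) σ (fun j k hk => ?_) i⟩⟩
  rw [hσ j]
  exact hPd _ _ hk.symm
end
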